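/- arXiv:1510.04312 — 5 statements merged into one kernel-verified Lean document; each statement's English description precedes it below -/
import Mathlib

section
/- Let B be a Banach space and let E, F be closed subspaces with B = E ⊕ F (topological direct sum), and let π_{E⊕F} : B → E denote the bounded projection onto E along F. If E' is a closed subspace of B such that d_H(E, E') < |π_{E⊕F}|^{-1}, then B = E' ⊕ F. -/
open MeasureTheory Filter Metric Module Submodule Set

noncomputable section

namespace BY

variable {B B' : Type*}

/-- The unit sphere of a subspace `E`. -/
def subSphere [NormedAddCommGroup B] [NormedSpace ℝ B] (E : Submodule ℝ B) : Set B :=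
  {v : B | v ∈ E ∧ ‖v‖ = 1}

/-- `d_H(E, E')`: the Hausdorff distance between the unit spheres of `E` and `E'`. -/
def dH [NormedAddCommGroup B] [NormedSpace ℝ B] (E E' : Submodule ℝ B) : ℝ :=
  Metric.hausdorffDist (subSphere E) (subSphere E')

/-- The supremum of `‖π x‖` over `x ∈ S`, where `π` is the projection onto `E` along `F`. -/
def projNormOn [NormedAddCommGroup B] [NormedSpace ℝ B] (E F : Submodule ℝ B)
    (h : IsCompl E F) (S : Set B) : ℝ :=
  sSup ((fun x => ‖(E.linearProjOfIsCompl F h x : B)‖) '' S)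

/-- `|π_{E⊕F}|`: the operator norm of the projection onto `E` along `F`. -/
def projNorm [NormedAddCommGroup B] [NormedSpace ℝ B] (E F : Submodule ℝ B)
    (h : IsCompl E F) : ℝ :=
  projNormOn E F h (Metric.closedBall 0 1)

/-- `α(E, F) = inf { ‖e - f‖ : e ∈ E, ‖e‖ = 1, f ∈ F }`. -/
def alphaAngle [NormedAddCommGroup B] [NormedSpace ℝ B] (E F : Submodule ℝ B) : ℝ :=
  sInf {r : ℝ | ∃ e ∈ E, ∃ f ∈ F, ‖e‖ = 1 ∧ r = ‖e - f‖}

/-- `ω_k`: the volume of the Euclidean unit ball in `ℝ^k`. -/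
def euclideanBallVol (k : ℕ) : ENNReal :=
  volume (Metric.closedBall (0 : EuclideanSpace ℝ (Fin k)) 1)

/-- `μ` is the induced volume `m_E` on the `k`-dimensional subspace `E`: the (unique) Haar
measure on `E` assigning mass `ω_k` to the unit ball of `E`. -/
def IsInducedVolume [NormedAddCommGroup B] [NormedSpace ℝ B] [MeasurableSpace B]
    (E : Submodule ℝ B) (k : ℕ) (μ : Measure E) : Prop :=
  Measure.IsAddHaarMeasure μ ∧ μ {v : E | ‖v‖ ≤ 1} = euclideanBallVol k

/-- `det(A|E)`, computed with respect to induced volumes `μE` on `E` and `μF` on a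
subspace `F` containing `A(E)`: the ratio `μF(A(B_E)) / μE(B_E)` where `B_E` is
the unit ball of `E`. -/
def detIn [NormedAddCommGroup B] [NormedSpace ℝ B] [NormedAddCommGroup B'] [NormedSpace ℝ B']
    [MeasurableSpace B] [MeasurableSpace B']
    (A : B →L[ℝ] B') (E : Submodule ℝ B) (F : Submodule ℝ B')
    (μE : Measure E) (μF : Measure F) : ℝ :=
  (μF {w : F | ∃ v : B, v ∈ E ∧ ‖v‖ ≤ 1 ∧ A v = (w : B')}).toReal /
    (μE {v : E | ‖v‖ ≤ 1}).toReal

/-- `P[v₁, …, v_k]`: the parallelepiped spanned by the vectors `v i`. -/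
def pped [AddCommGroup B] [Module ℝ B] {k : ℕ} (v : Fin k → B) : Set B :=
  {x : B | ∃ a : Fin k → ℝ, (∀ i, a i ∈ Set.Icc (0 : ℝ) 1) ∧ x = ∑ i, a i • v i}

/-- `N[v₁, …, v_k]`: the sum of the norms of the projections, within the span of the `v i`,
onto each `⟨v i⟩` along the span of the other basis vectors. -/
def Nquan [NormedAddCommGroup B] [NormedSpace ℝ B] {k : ℕ} (v : Fin k → B) : ℝ :=
  ∑ i, sSup {r : ℝ | ∃ a : Fin k → ℝ, ‖∑ j, a j • v j‖ ≤ 1 ∧ r = ‖a i • v i‖}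

/-- The operator norm of the restriction of `A` to the subspace `E`. -/
def opNormOnSub [NormedAddCommGroup B] [NormedSpace ℝ B] [NormedAddCommGroup B']
    [NormedSpace ℝ B'] (A : B →L[ℝ] B') (E : Submodule ℝ B) : ℝ :=
  sSup {r : ℝ | ∃ v ∈ E, ‖v‖ ≤ 1 ∧ r = ‖A v‖}

/-- The `n`-th iterate (`n ∈ ℤ`) of the invertible pair `(f, g)`, `g = f⁻¹`. -/
def zIter {X : Type*} (f g : X → X) (n : ℤ) (x : X) : X :=
  if 0 ≤ n then f^[n.toNat] x else g^[(-n).toNat] x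

/-- `ψ'(x) = sup_{n ∈ ℤ} e^{-|n| δ} ψ(f^n x)`. -/
def psiSup {X : Type*} (f g : X → X) (ψ : X → ℝ) (δ : ℝ) (x : X) : ℝ :=
  sSup (Set.range fun n : ℤ => Real.exp (-|(n : ℝ)| * δ) * ψ (zIter f g n x))

/-- The cocycle `T^n_x = T_{f^{n-1} x} ∘ ⋯ ∘ T_x`. -/
def cocycle {X : Type*} [NormedAddCommGroup B] [NormedSpace ℝ B]
    (f : X → X) (T : X → B →L[ℝ] B) : ℕ → X → B →L[ℝ] B
  | 0, _ => ContinuousLinearMap.id ℝ B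
  | n + 1, x => (cocycle f T n (f x)).comp (T x)

end BY

end

/-!
Let `π` be the projection onto `E` along `F` and fix `δ` with `d_H(E, E') < δ < |π|⁻¹`. Every
`x ∈ E'` lies within `δ‖x‖` of a vector of `E` of the same norm, which `π` fixes, so
`‖π x‖ ≥ (1 - |π| δ) ‖x‖`: `π` is injective on `E'` with closed image, `E'` being complete.
Every `e ∈ E` lies within `δ‖e‖` of some `x ∈ E'`, so `π(E')` comes within relative distance
`|π| δ < 1` of every vector of `E`, and Riesz's lemma forces `π(E') = E`. Thus `π` restricts to
a bijection `E' → E`, and then `E'` is complementary to `ker π = F`.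
-/

open Function

theorem Submodule.isCompl_ker_of_bijective_comp_subtype {R M N : Type*} [Ring R]
    [AddCommGroup M] [Module R M] [AddCommGroup N] [Module R N] (p : Submodule R M)
    (f : M →ₗ[R] N) (hf : Bijective (f ∘ₗ p.subtype)) : IsCompl p (LinearMap.ker f) := by
  let e := LinearEquiv.ofBijective _ hf
  have h := LinearMap.isCompl_of_proj (f := e.symm.toLinearMap ∘ₗ f)
    fun x => LinearEquiv.ofBijective_symm_apply_apply (h := hf) _ x
  rwa [LinearEquiv.ker_comp] at h

theorem Submodule.eq_top_of_isClosed_of_forall_exists_norm_sub_le {𝕜 E : Type*}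
    [NormedField 𝕜] [NormedAddCommGroup E] [NormedSpace 𝕜 E] {G : Submodule 𝕜 E}
    (hG : IsClosed (G : Set E)) {r : ℝ} (hr : r < 1)
    (hnear : ∀ x, ∃ y ∈ G, ‖x - y‖ ≤ r * ‖x‖) : G = ⊤ := by
  by_contra hne
  obtain ⟨x, hx⟩ : ∃ x, x ∉ G := by simpa [Submodule.eq_top_iff'] using hne
  obtain ⟨r', hrr', hr'⟩ := exists_between hr
  obtain ⟨x₀, hx₀, hfar⟩ := riesz_lemma hG ⟨x, hx⟩ hr'
  have hx₀pos : 0 < ‖x₀‖ := norm_pos_iff.2 fun h0 => hx₀ (h0 ▸ G.zero_mem)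
  obtain ⟨y, hy, hx₀y⟩ := hnear x₀
  linarith [hfar y hy, mul_lt_mul_of_pos_right hrr' hx₀pos]

section

variable {B B' : Type*} [NormedAddCommGroup B] [NormedSpace ℝ B]
  [NormedAddCommGroup B'] [NormedSpace ℝ B']

/-- An unbounded set of reals has `sSup = 0`, so positivity of the supremum already makes `T`
bounded. -/
theorem LinearMap.norm_apply_le_sSup_mul_norm (T : B →ₗ[ℝ] B')
    (hT : 0 < sSup ((fun x => ‖T x‖) '' closedBall (0 : B) 1)) (x : B) :
    ‖T x‖ ≤ sSup ((fun x => ‖T x‖) '' closedBall (0 : B) 1) * ‖x‖ := by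
  have hbdd : BddAbove ((fun x => ‖T x‖) '' closedBall (0 : B) 1) := by
    by_contra hb
    exact hT.ne' (Real.sSup_of_not_bddAbove hb)
  rcases eq_or_ne x 0 with rfl | hx
  · simp
  have hxpos : 0 < ‖x‖ := norm_pos_iff.2 hx
  have hunit : ‖x‖⁻¹ • x ∈ closedBall (0 : B) 1 := by
    simp [norm_smul, hxpos.ne']
  have h : ‖T (‖x‖⁻¹ • x)‖ ≤ _ := le_csSup hbdd ⟨_, hunit, rfl⟩
  rw [map_smul, norm_smul, Real.norm_of_nonneg (inv_nonneg.2 hxpos.le),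
    inv_mul_le_iff₀ hxpos] at h
  linarith

variable {E E' : Submodule ℝ B} {π : B →ₗ[ℝ] E} {M δ : ℝ}

theorem mul_norm_le_norm_apply_of_forall_exists_near (hπ : ∀ e : E, π e = e) (hM0 : 0 ≤ M)
    (hM : ∀ x, ‖π x‖ ≤ M * ‖x‖)
    (hnear : ∀ x ∈ E', ∃ e ∈ E, ‖e‖ = ‖x‖ ∧ ‖x - e‖ ≤ δ * ‖x‖) {x : B} (hx : x ∈ E') :
    (1 - M * δ) * ‖x‖ ≤ ‖π x‖ := by
  obtain ⟨e, he, hne, hxe⟩ := hnear x hx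
  have hπe : ‖π e‖ = ‖x‖ := by rw [hπ ⟨e, he⟩]; exact hne
  have htri := norm_sub_norm_le (π e) (π x)
  rw [norm_sub_rev, ← map_sub] at htri
  calc (1 - M * δ) * ‖x‖ = ‖π e‖ - M * (δ * ‖x‖) := by rw [hπe]; ring
    _ ≤ ‖π e‖ - M * ‖x - e‖ := by gcongr
    _ ≤ ‖π e‖ - ‖π (x - e)‖ := by gcongr; exact hM _
    _ ≤ ‖π x‖ := by linarith

theorem bijective_proj_comp_subtype_of_forall_exists_near [CompleteSpace E']
    (hπ : ∀ e : E, π e = e) (hM0 : 0 ≤ M) (hM : ∀ x, ‖π x‖ ≤ M * ‖x‖) (hMδ : M * δ < 1)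
    (hnear : ∀ e ∈ E, ∃ x ∈ E', ‖e - x‖ ≤ δ * ‖e‖)
    (hnear' : ∀ x ∈ E', ∃ e ∈ E, ‖e‖ = ‖x‖ ∧ ‖x - e‖ ≤ δ * ‖x‖) :
    Bijective (π ∘ₗ E'.subtype) := by
  set f := π ∘ₗ E'.subtype
  obtain ⟨K, hK⟩ : ∃ K, AntilipschitzWith K f :=
    antilipschitzWith_iff_exists_mul_le_norm.2
      ⟨1 - M * δ, by linarith, fun x =>
        mul_norm_le_norm_apply_of_forall_exists_near hπ hM0 hM hnear' x.2⟩
  have hclosed : IsClosed (LinearMap.range f : Set E) := by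
    rw [LinearMap.coe_range]
    exact hK.isClosed_range (AddMonoidHomClass.uniformContinuous_of_bound f M fun x => hM x)
  refine ⟨hK.injective, LinearMap.range_eq_top.1 ?_⟩
  refine Submodule.eq_top_of_isClosed_of_forall_exists_norm_sub_le hclosed hMδ fun e => ?_
  obtain ⟨x, hx, hex⟩ := hnear e e.2
  refine ⟨f ⟨x, hx⟩, LinearMap.mem_range_self f _, ?_⟩
  calc ‖e - f ⟨x, hx⟩‖ = ‖π (e - x)‖ := by rw [map_sub, hπ e]; rfl
    _ ≤ M * ‖(e : B) - x‖ := hM _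
    _ ≤ M * (δ * ‖e‖) := by gcongr; exact hex
    _ = M * δ * ‖e‖ := by ring

end

namespace BY

variable {B : Type*} [NormedAddCommGroup B] [NormedSpace ℝ B] {E E' : Submodule ℝ B}

theorem subSphere_nonempty (hE : E ≠ ⊥) : (subSphere E).Nonempty := by
  obtain ⟨v, hv, hv0⟩ := Submodule.exists_mem_ne_zero_of_ne_bot hE
  exact ⟨‖v‖⁻¹ • v, E.smul_mem _ hv, by simp [norm_smul, hv0]⟩

theorem isBounded_subSphere (E : Submodule ℝ B) : Bornology.IsBounded (subSphere E) :=
  (isBounded_closedBall (x := 0) (r := 1)).subset fun v hv => by simp [hv.2]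

theorem dH_comm (E E' : Submodule ℝ B) : dH E E' = dH E' E := hausdorffDist_comm

theorem dH_nonneg (E E' : Submodule ℝ B) : 0 ≤ dH E E' := hausdorffDist_nonneg

theorem exists_near_of_dH_lt (hE : E ≠ ⊥) (hE' : E' ≠ ⊥) {δ : ℝ} (hδ : dH E E' < δ)
    {x : B} (hx : x ∈ E) : ∃ y ∈ E', ‖y‖ = ‖x‖ ∧ ‖x - y‖ ≤ δ * ‖x‖ := by
  rcases eq_or_ne x 0 with rfl | hx0
  · exact ⟨0, E'.zero_mem, by simp⟩
  have hxpos : 0 < ‖x‖ := norm_pos_iff.2 hx0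
  have hfin : hausdorffEDist (subSphere E) (subSphere E') ≠ ⊤ :=
    hausdorffEDist_ne_top_of_nonempty_of_bounded (subSphere_nonempty hE)
      (subSphere_nonempty hE') (isBounded_subSphere E) (isBounded_subSphere E')
  have hu : ‖x‖⁻¹ • x ∈ subSphere E := ⟨E.smul_mem _ hx, by simp [norm_smul, hxpos.ne']⟩
  obtain ⟨v, ⟨hvE', hv⟩, hdist⟩ := exists_dist_lt_of_hausdorffDist_lt hu hδ hfin
  refine ⟨‖x‖ • v, E'.smul_mem _ hvE', by simp [norm_smul, hv], ?_⟩
  calc ‖x - ‖x‖ • v‖ = ‖x‖ * ‖‖x‖⁻¹ • x - v‖ := by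
        rw [← Real.norm_of_nonneg hxpos.le, ← norm_smul, smul_sub, smul_smul,
          Real.norm_of_nonneg hxpos.le, mul_inv_cancel₀ hxpos.ne', one_smul]
    _ ≤ ‖x‖ * δ := by rw [← dist_eq_norm]; gcongr
    _ = δ * ‖x‖ := mul_comm _ _

end BY

theorem statement0_general {B : Type*} [NormedAddCommGroup B] [NormedSpace ℝ B] [CompleteSpace B]
    (E F E' : Submodule ℝ B)
    (hE'c : IsClosed (E' : Set B))
    (hEbot : E ≠ ⊥) (hE'bot : E' ≠ ⊥)
    (h : IsCompl E F)
    (hd : BY.dH E E' < (BY.projNorm E F h)⁻¹) :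
    IsCompl E' F := by
  set π := E.projectionOnto F h
  set M := BY.projNorm E F h
  have hMpos : 0 < M := inv_pos.1 ((BY.dH_nonneg E E').trans_lt hd)
  have hM : ∀ x, ‖π x‖ ≤ M * ‖x‖ := π.norm_apply_le_sSup_mul_norm hMpos
  obtain ⟨δ, hdδ, hδM⟩ := exists_between hd
  have hMδ : M * δ < 1 :=
    calc M * δ < M * M⁻¹ := by gcongr
      _ = 1 := mul_inv_cancel₀ hMpos.ne'
  have : CompleteSpace E' := hE'c.completeSpace_coe
  have hbij : Bijective (π ∘ₗ E'.subtype) :=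
    bijective_proj_comp_subtype_of_forall_exists_near (Submodule.projectionOnto_apply_left h)
      hMpos.le hM hMδ
      (fun _ he => (BY.exists_near_of_dH_lt hEbot hE'bot hdδ he).imp fun _ hy => ⟨hy.1, hy.2.2⟩)
      (fun _ hx => BY.exists_near_of_dH_lt hE'bot hEbot (BY.dH_comm E E' ▸ hdδ) hx)
  simpa [π, Submodule.ker_projectionOnto] using E'.isCompl_ker_of_bijective_comp_subtype π hbij

/-- Lemma 2.3 of the paper. Let `B` be a Banach space, `E, F` closed
subspaces with `B = E ⊕ F`. If `E'` is a closed subspace with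
`d_H(E, E') < |π_{E⊕F}|⁻¹`, then `B = E' ⊕ F`. -/
theorem statement0 {B : Type*} [NormedAddCommGroup B] [NormedSpace ℝ B] [CompleteSpace B]
    (E F E' : Submodule ℝ B)
    (hEc : IsClosed (E : Set B)) (hFc : IsClosed (F : Set B)) (hE'c : IsClosed (E' : Set B))
    (hEbot : E ≠ ⊥) (hE'bot : E' ≠ ⊥)
    (h : IsCompl E F)
    (hd : BY.dH E E' < (BY.projNorm E F h)⁻¹) :
    IsCompl E' F :=
  statement0_general E F E' hE'c hEbot hE'bot h hd
end

section
/- Let E be a subspace of a Banach space B of finite dimension k. Then there is an inner product (·,·) on E, with associated norm ‖·‖, such that for all v ∈ E one has ‖v‖ ≤ |v| ≤ √k ‖v‖. -/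
open MeasureTheory Filter Metric Module Submodule Set

/-! Fix coordinates `L : E ≃ₗ (Fin k → ℝ)` and write `Q_M v = L v ⬝ᵥ M *ᵥ L v`. Among the positive
semidefinite `M` with `Q_M ≤ ‖·‖²` (ellipsoids containing the unit ball) choose one maximising
`det M` (John's ellipsoid); the set is compact and contains a positive multiple of `1`, so `M`
exists and is positive definite. If some `v₀` had `‖v₀‖² > k · Q_M v₀`, let `φ` be a norming
functional at `v₀`: Cauchy–Schwarz for `M` gives `φ M⁻¹ φ > k`, and for small `t > 0` the form
`(Q_M + t φ²) / (1 + t)` is still `≤ ‖·‖²` but has determinant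
`det M · (1 + t φ M⁻¹ φ) / (1 + t) ^ k > det M`. -/

open Matrix

theorem exists_one_add_pow_lt {k : ℕ} {e : ℝ} (he : k < e) :
    ∃ t : ℝ, 0 < t ∧ (1 + t) ^ k < 1 + t * e := by
  have hderiv : HasDerivAt (fun t : ℝ => (1 + t) ^ k) k 0 := by
    simpa using ((hasDerivAt_id (0 : ℝ)).const_add 1).fun_pow k
  obtain ⟨t, hslope, ht⟩ :=
    ((hderiv.tendsto_slope_zero_right.eventually (gt_mem_nhds he)).and self_mem_nhdsWithin).exists
  refine ⟨t, ht, ?_⟩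
  simp only [zero_add, add_zero, one_pow, smul_eq_mul] at hslope
  rw [inv_mul_lt_iff₀ ht] at hslope
  linarith

namespace Matrix

variable {n : Type*} [Fintype n]

theorem isClosed_setOf_posSemidef : IsClosed {M : Matrix n n ℝ | M.PosSemidef} := by
  simp only [posSemidef_iff_dotProduct_mulVec, star_trivial, Set.ofPred_and, Set.ofPred_forall]
  exact (isClosed_eq (by fun_prop) continuous_id).inter
    (isClosed_iInter fun x => isClosed_le continuous_const (by fun_prop))

theorem IsHermitian.dotProduct_mulVec_comm {M : Matrix n n ℝ} (hM : M.IsHermitian)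
    (x y : n → ℝ) : x ⬝ᵥ M *ᵥ y = y ⬝ᵥ M *ᵥ x := by
  rw [← dotProduct_transpose_mulVec, ← conjTranspose_eq_transpose_of_trivial, hM.eq]

theorem dotProduct_vecMulVec_mulVec_self {R : Type*} [CommRing R] (f x : n → R) :
    x ⬝ᵥ vecMulVec f f *ᵥ x = (f ⬝ᵥ x) ^ 2 := by
  rw [vecMulVec_mulVec, op_smul_eq_smul, dotProduct_smul, smul_eq_mul, dotProduct_comm, sq]

variable [DecidableEq n]

theorem det_add_vecMulVec {R : Type*} [CommRing R] {A : Matrix n n R} (hA : IsUnit A.det)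
    (u v : n → R) : (A + vecMulVec u v).det = A.det * (1 + v ⬝ᵥ A⁻¹ *ᵥ u) := by
  rw [vecMulVec_eq Unit, det_add_replicateCol_mul_replicateRow hA,
    det_unique (1 + _ : Matrix Unit Unit R)]
  simp only [PUnit.default_eq_unit, add_apply, one_apply_eq, mul_apply, replicateRow_apply,
    replicateCol_apply, Finset.sum_mul, mul_assoc, dotProduct, mulVec, Finset.mul_sum]
  rw [Finset.sum_comm]

theorem PosSemidef.dotProduct_mulVec_sq_le {M : Matrix n n ℝ} (hM : M.PosSemidef)
    (x y : n → ℝ) : (x ⬝ᵥ M *ᵥ y) ^ 2 ≤ (x ⬝ᵥ M *ᵥ x) * (y ⬝ᵥ M *ᵥ y) := by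
  have := (toBilin' M).apply_mul_apply_le_of_forall_zero_le
    (fun z => by simpa [toBilin'_apply'] using hM.dotProduct_mulVec_nonneg z) x y
  simpa only [toBilin'_apply', sq, hM.isHermitian.dotProduct_mulVec_comm y x] using this

theorem PosDef.dotProduct_sq_le_inv_mul {M : Matrix n n ℝ} (hM : M.PosDef) (f x : n → ℝ) :
    (f ⬝ᵥ x) ^ 2 ≤ (f ⬝ᵥ M⁻¹ *ᵥ f) * (x ⬝ᵥ M *ᵥ x) := by
  have hf : M *ᵥ (M⁻¹ *ᵥ f) = f := by
    rw [mulVec_mulVec, mul_nonsing_inv _ (isUnit_iff_ne_zero.mpr hM.det_pos.ne'), one_mulVec]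
  have := hM.posSemidef.dotProduct_mulVec_sq_le (M⁻¹ *ᵥ f) x
  rwa [hM.isHermitian.dotProduct_mulVec_comm _ x, hf, dotProduct_comm x, dotProduct_comm _ f]
    at this

theorem PosDef.exists_det_lt_det_smul_add_vecMulVec {M : Matrix n n ℝ} (hM : M.PosDef)
    {f x : n → ℝ} (hfx : Fintype.card n * (x ⬝ᵥ M *ᵥ x) < (f ⬝ᵥ x) ^ 2) :
    ∃ t : ℝ, 0 < t ∧ M.det < ((1 + t)⁻¹ • (M + t • vecMulVec f f)).det := by
  set e := f ⬝ᵥ M⁻¹ *ᵥ f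
  have hke : (Fintype.card n : ℝ) < e := by
    by_contra! he
    have hQ : 0 ≤ x ⬝ᵥ M *ᵥ x := by simpa using hM.posSemidef.dotProduct_mulVec_nonneg x
    have := mul_le_mul_of_nonneg_right he hQ
    linarith [hM.dotProduct_sq_le_inv_mul f x]
  obtain ⟨t, ht, hpow⟩ := exists_one_add_pow_lt hke
  refine ⟨t, ht, ?_⟩
  have hdet : ((1 + t)⁻¹ • (M + t • vecMulVec f f)).det =
      M.det * (1 + t * e) / (1 + t) ^ Fintype.card n := by
    rw [det_smul, ← smul_vecMulVec, det_add_vecMulVec (isUnit_iff_ne_zero.mpr hM.det_pos.ne'),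
      mulVec_smul, dotProduct_smul, smul_eq_mul, inv_pow, div_eq_inv_mul, mul_comm t]
  rw [hdet, lt_div_iff₀ (by positivity)]
  exact mul_lt_mul_of_pos_left hpow hM.det_pos

end Matrix

section JohnEllipsoid

variable {V : Type*} [NormedAddCommGroup V] [NormedSpace ℝ V] {n : Type*} [Fintype n]

/-- `M` encodes the ellipsoid `{v | L v ⬝ᵥ M *ᵥ L v ≤ 1}`, which contains the unit ball of `V`
iff `L v ⬝ᵥ M *ᵥ L v ≤ ‖v‖ ^ 2` for all `v`. -/
def ellipsoidsContainingUnitBall (L : V ≃ₗ[ℝ] (n → ℝ)) : Set (Matrix n n ℝ) :=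
  {M | M.PosSemidef ∧ ∀ v, L v ⬝ᵥ M *ᵥ L v ≤ ‖v‖ ^ 2}

variable (L : V ≃ₗ[ℝ] (n → ℝ))

theorem isClosed_ellipsoidsContainingUnitBall : IsClosed (ellipsoidsContainingUnitBall L) := by
  simp only [ellipsoidsContainingUnitBall, Set.ofPred_and, Set.ofPred_forall]
  exact isClosed_setOf_posSemidef.inter
    (isClosed_iInter fun v => isClosed_le (by fun_prop) continuous_const)

variable [DecidableEq n]

theorem abs_le_of_mem_ellipsoidsContainingUnitBall {M : Matrix n n ℝ}
    (hM : M ∈ ellipsoidsContainingUnitBall L) (i j : n) :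
    |M i j| ≤ ‖L.symm (Pi.single i 1)‖ * ‖L.symm (Pi.single j 1)‖ := by
  have hdiag (i : n) : M i i ≤ ‖L.symm (Pi.single i 1)‖ ^ 2 := by
    simpa using hM.2 (L.symm (Pi.single i 1))
  refine abs_le_of_sq_le_sq ?_ (by positivity)
  calc M i j ^ 2 ≤ M i i * M j j := by
        simpa using hM.1.dotProduct_mulVec_sq_le (Pi.single i 1) (Pi.single j 1)
    _ ≤ _ := by
        rw [mul_pow]
        exact mul_le_mul (hdiag i) (hdiag j) hM.1.diag_nonneg (sq_nonneg _)

theorem isCompact_ellipsoidsContainingUnitBall :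
    IsCompact (ellipsoidsContainingUnitBall L) := by
  set r : n → n → ℝ := fun i j => ‖L.symm (Pi.single i 1)‖ * ‖L.symm (Pi.single j 1)‖
  refine (isCompact_univ_pi fun i => isCompact_univ_pi fun j =>
    isCompact_Icc (a := -r i j) (b := r i j)).of_isClosed_subset
    (isClosed_ellipsoidsContainingUnitBall L) fun M hM i _ j _ => ?_
  exact abs_le.mp (abs_le_of_mem_ellipsoidsContainingUnitBall L hM i j)

theorem exists_smul_one_mem_ellipsoidsContainingUnitBall :
    ∃ c : ℝ, 0 < c ∧ c • (1 : Matrix n n ℝ) ∈ ellipsoidsContainingUnitBall L := by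
  have := L.symm.finiteDimensional
  set L' : V →L[ℝ] (n → ℝ) := LinearMap.toContinuousLinearMap L.toLinearMap
  set C := Fintype.card n * ‖L'‖ ^ 2
  have hC (v : V) : L v ⬝ᵥ L v ≤ C * ‖v‖ ^ 2 := by
    calc L v ⬝ᵥ L v = ∑ i, L v i ^ 2 := by simp [dotProduct, sq]
      _ ≤ ∑ _i : n, (‖L'‖ * ‖v‖) ^ 2 := by
        refine Finset.sum_le_sum fun i _ => sq_le_sq.mpr ?_
        rw [abs_of_nonneg (by positivity : (0 : ℝ) ≤ ‖L'‖ * ‖v‖), ← Real.norm_eq_abs]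
        exact (norm_le_pi_norm (L' v) i).trans (L'.le_opNorm v)
      _ = C * ‖v‖ ^ 2 := by
        simp only [Finset.sum_const, Finset.card_univ, nsmul_eq_mul, C]
        ring
  refine ⟨(C + 1)⁻¹, by positivity, PosSemidef.one.smul (by positivity), fun v => ?_⟩
  rw [smul_mulVec, one_mulVec, dotProduct_smul, smul_eq_mul, inv_mul_le_iff₀ (by positivity)]
  nlinarith [hC v, sq_nonneg ‖v‖]

theorem exists_det_lt_of_mem_ellipsoidsContainingUnitBall {M : Matrix n n ℝ}
    (hM : M ∈ ellipsoidsContainingUnitBall L) (hMpos : M.PosDef) {v₀ : V}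
    (hv₀ : Fintype.card n * (L v₀ ⬝ᵥ M *ᵥ L v₀) < ‖v₀‖ ^ 2) :
    ∃ M' ∈ ellipsoidsContainingUnitBall L, M.det < M'.det := by
  obtain ⟨g, hg, hgv₀⟩ := exists_dual_vector'' ℝ v₀
  set f := (dotProductEquiv ℝ n).symm ((g : V →ₗ[ℝ] ℝ) ∘ₗ L.symm.toLinearMap)
  have hf (v : V) : f ⬝ᵥ L v = g v := by
    rw [← dotProductEquiv_apply_apply, LinearEquiv.apply_symm_apply]
    simp
  have hfv (v : V) : (f ⬝ᵥ L v) ^ 2 ≤ ‖v‖ ^ 2 := by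
    rw [hf, sq_le_sq, abs_norm, ← Real.norm_eq_abs]
    exact (g.le_opNorm v).trans (mul_le_of_le_one_left (norm_nonneg v) hg)
  obtain ⟨t, ht, hdet⟩ := hMpos.exists_det_lt_det_smul_add_vecMulVec (f := f) (x := L v₀)
    (by simpa [hf, hgv₀] using hv₀)
  refine ⟨_, ⟨?_, fun v => ?_⟩, hdet⟩
  · have hff : (vecMulVec f f).PosSemidef := by simpa using posSemidef_vecMulVec_self_star f
    exact (hM.1.add (hff.smul ht.le)).smul (by positivity)
  · rw [smul_mulVec, dotProduct_smul, add_mulVec, dotProduct_add, smul_mulVec, dotProduct_smul,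
      dotProduct_vecMulVec_mulVec_self, smul_eq_mul, smul_eq_mul, inv_mul_le_iff₀ (by positivity)]
    nlinarith [hM.2 v, hfv v]

theorem exists_posDef_dotProduct_mulVec_le_norm_sq_le_card_mul :
    ∃ M : Matrix n n ℝ, M.PosDef ∧ ∀ v : V,
      L v ⬝ᵥ M *ᵥ L v ≤ ‖v‖ ^ 2 ∧ ‖v‖ ^ 2 ≤ Fintype.card n * (L v ⬝ᵥ M *ᵥ L v) := by
  obtain ⟨c, hc, hcS⟩ := exists_smul_one_mem_ellipsoidsContainingUnitBall L
  obtain ⟨M, hMS, hmax⟩ := (isCompact_ellipsoidsContainingUnitBall L).exists_isMaxOn ⟨_, hcS⟩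
    continuous_id.matrix_det.continuousOn
  have hMpos : M.PosDef := by
    refine hMS.1.posDef_iff_det_ne_zero.mpr (ne_of_gt ?_)
    calc 0 < c ^ Fintype.card n := by positivity
      _ = (c • (1 : Matrix n n ℝ)).det := by simp
      _ ≤ M.det := hmax hcS
  refine ⟨M, hMpos, fun v => ⟨hMS.2 v, not_lt.mp fun hv => ?_⟩⟩
  obtain ⟨M', hM'S, hlt⟩ := exists_det_lt_of_mem_ellipsoidsContainingUnitBall L hMS hMpos hv
  exact (hmax hM'S).not_gt hlt

end JohnEllipsoid

theorem statement3_general {B : Type*} [NormedAddCommGroup B] [NormedSpace ℝ B]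
    (E : Submodule ℝ B) [FiniteDimensional ℝ E] (k : ℕ)
    (hdim : Module.finrank ℝ E = k) :
    ∃ ip : E → E → ℝ,
      (∀ u v w : E, ip (u + v) w = ip u w + ip v w) ∧
      (∀ (c : ℝ) (u v : E), ip (c • u) v = c * ip u v) ∧
      (∀ u v : E, ip u v = ip v u) ∧
      (∀ v : E, v ≠ 0 → 0 < ip v v) ∧
      (∀ v : E, Real.sqrt (ip v v) ≤ ‖v‖ ∧ ‖v‖ ≤ Real.sqrt k * Real.sqrt (ip v v)) := by
  set L := (Module.finBasisOfFinrankEq ℝ E hdim).equivFun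
  obtain ⟨M, hM, hbound⟩ := exists_posDef_dotProduct_mulVec_le_norm_sq_le_card_mul L
  refine ⟨fun u v => L u ⬝ᵥ M *ᵥ L v, fun u v w => by simp [add_dotProduct],
    fun c u v => by simp [smul_dotProduct], fun u v => hM.isHermitian.dotProduct_mulVec_comm _ _,
    fun v hv => by simpa using hM.dotProduct_mulVec_pos (L.map_ne_zero_iff.mpr hv), fun v => ?_⟩
  obtain ⟨hle, hge⟩ := hbound v
  rw [Fintype.card_fin] at hge
  refine ⟨(Real.sqrt_le_left (norm_nonneg v)).mpr hle, ?_⟩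
  rw [← Real.sqrt_mul (Nat.cast_nonneg k), Real.le_sqrt (norm_nonneg v) ((sq_nonneg _).trans hge)]
  exact hge

/-- John's theorem, Theorem 2.5 of the paper. Let `E` be a subspace of a
Banach space `B` of finite dimension `k`. Then there is an inner product `(·,·)` on `E`,
with associated norm `‖·‖ = √(ip v v)`, such that `‖v‖ ≤ |v| ≤ √k ‖v‖` for all `v ∈ E`. -/
theorem statement3 {B : Type*} [NormedAddCommGroup B] [NormedSpace ℝ B] [CompleteSpace B]
    (E : Submodule ℝ B) [FiniteDimensional ℝ E] (k : ℕ)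
    (hdim : Module.finrank ℝ E = k) :
    ∃ ip : E → E → ℝ,
      (∀ u v w : E, ip (u + v) w = ip u w + ip v w) ∧
      (∀ (c : ℝ) (u v : E), ip (c • u) v = c * ip u v) ∧
      (∀ u v : E, ip u v = ip v u) ∧
      (∀ v : E, v ≠ 0 → 0 < ip v v) ∧
      (∀ v : E, Real.sqrt (ip v v) ≤ ‖v‖ ∧ ‖v‖ ≤ Real.sqrt k * Real.sqrt (ip v v)) :=
  statement3_general E k hdim
end

section
/- Let E, F, G be subspaces of a Banach space B of the same finite dimension k, and let A, B' : B → B be bounded linear maps with A(E) ⊂ F and B'(F) ⊂ G. Then: (1) m_F(A(S)) = det(A|E) · m_E(S) for every Borel set S ⊂ E; and (2) det(B'A | E) = det(B' | F) · det(A | E). -/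
open MeasureTheory Filter Metric Module Submodule Set

section Aux

open MeasureTheory Module

variable {B : Type*} [NormedAddCommGroup B] [NormedSpace ℝ B]
    [MeasurableSpace B] [BorelSpace B]

lemma euclideanBallVol_ne_zero (k : ℕ) : BY.euclideanBallVol k ≠ 0 :=
  (measure_closedBall_pos volume (0 : EuclideanSpace ℝ (Fin k)) one_pos).ne'

lemma euclideanBallVol_ne_top (k : ℕ) : BY.euclideanBallVol k ≠ ⊤ :=
  measure_closedBall_lt_top.ne

set_option maxHeartbeats 1000000 in
lemma key_lemma (k : ℕ) (E F : Submodule ℝ B)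
    [FiniteDimensional ℝ E] [FiniteDimensional ℝ F]
    (hE : finrank ℝ E = k) (hF : finrank ℝ F = k)
    (A : B →L[ℝ] B) (hA : ∀ v ∈ E, A v ∈ F)
    (μE : Measure E) (μF : Measure F)
    (hμE : BY.IsInducedVolume E k μE) (hμF : BY.IsInducedVolume F k μF) :
    ∀ S : Set E, MeasurableSet S →
      μF {w : F | ∃ v : E, v ∈ S ∧ A (v : B) = (w : B)} =
        ENNReal.ofReal (BY.detIn A E F μE μF) * μE S := by
  haveI := hμE.1
  haveI := hμF.1
  set Al : E →ₗ[ℝ] F := (A : B →ₗ[ℝ] B).restrict hA with hAl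
  have hAlval : ∀ v : E, ((Al v : F) : B) = A (v : B) := fun v => rfl
  set ballE : Set E := {v : E | ‖v‖ ≤ 1} with hballE
  have hset : ∀ S : Set E, {w : F | ∃ v : E, v ∈ S ∧ A (v : B) = (w : B)} = Al '' S := by
    intro S
    ext w
    constructor
    · rintro ⟨v, hv, hw⟩
      exact ⟨v, hv, Subtype.ext (by rw [hAlval, hw])⟩
    · rintro ⟨v, hv, hw⟩
      exact ⟨v, hv, by rw [← hAlval, hw]⟩
  have hnum : {w : F | ∃ v : B, v ∈ E ∧ ‖v‖ ≤ 1 ∧ A v = (w : B)} = Al '' ballE := by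
    ext w
    constructor
    · rintro ⟨v, hv, h1, hw⟩
      exact ⟨⟨v, hv⟩, h1, Subtype.ext (by rw [hAlval]; exact hw)⟩
    · rintro ⟨v, hv, hw⟩
      exact ⟨(v : B), v.2, hv, by rw [← hAlval, hw]⟩
  have hm0 : μE ballE ≠ 0 := by rw [hμE.2]; exact euclideanBallVol_ne_zero k
  have hmtop : μE ballE ≠ ⊤ := by rw [hμE.2]; exact euclideanBallVol_ne_top k
  by_cases hinj : Function.Injective Al
  · -- invertible case
    have hsurj : Function.Surjective Al :=
      (LinearMap.injective_iff_surjective_of_finrank_eq_finrank (by rw [hE, hF])).mp hinj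
    let e0 : E ≃ₗ[ℝ] F := LinearEquiv.ofBijective Al ⟨hinj, hsurj⟩
    let e : E ≃L[ℝ] F := e0.toContinuousLinearEquiv
    have he : ∀ v : E, e v = Al v := fun v => rfl
    haveI : (Measure.map e μE).IsAddHaarMeasure := e.isAddHaarMeasure_map μE
    set c : NNReal := Measure.addHaarScalarFactor (Measure.map e μE) μF with hc
    have hcpos : 0 < c := Measure.addHaarScalarFactor_pos_of_isAddHaarMeasure _ _
    have hmap : Measure.map e μE = (c : ENNReal) • μF :=
      Measure.isAddLeftInvariant_eq_smul _ _
    have himg : ∀ S : Set E, MeasurableSet S →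
        μF (Al '' S) = (c : ENNReal)⁻¹ * μE S := by
      intro S hS
      have hAS : Al '' S = e.symm ⁻¹' S := by
        ext w
        rw [Set.mem_preimage]
        constructor
        · rintro ⟨v, hv, hw⟩
          have : e.symm w = v := by rw [← hw, ← he]; exact e.symm_apply_apply v
          rwa [this]
        · intro hw
          exact ⟨e.symm w, hw, by rw [← he]; exact e.apply_symm_apply w⟩
      have hmeas : MeasurableSet (Al '' S) := by
        rw [hAS]; exact e.symm.continuous.measurable hS
      have h1 : Measure.map e μE (Al '' S) = μE S := by
        rw [Measure.map_apply e.continuous.measurable hmeas, hAS]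
        congr 1
        ext v
        simp [Set.mem_preimage, e.symm_apply_apply]
      rw [hmap] at h1
      simp only [Measure.smul_apply, smul_eq_mul] at h1
      rw [← h1, ← mul_assoc, ENNReal.inv_mul_cancel (by exact_mod_cast hcpos.ne')
        ENNReal.coe_ne_top, one_mul]
    have hdet : ENNReal.ofReal (BY.detIn A E F μE μF) = (c : ENNReal)⁻¹ := by
      have hball : μF (Al '' ballE) = (c : ENNReal)⁻¹ * μE ballE := by
        apply himg
        have : ballE = Metric.closedBall (0 : E) 1 := by
          ext v; simp [hballE, Metric.mem_closedBall, dist_zero_right]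
        rw [this]; exact Metric.isClosed_closedBall.measurableSet
      have hcinv_top : (c : ENNReal)⁻¹ ≠ ⊤ := by
        simp [ENNReal.inv_ne_top]
        exact_mod_cast hcpos.ne'
      have hD_top : μF (Al '' ballE) ≠ ⊤ := by
        rw [hball]
        exact ENNReal.mul_ne_top hcinv_top hmtop
      unfold BY.detIn
      rw [hnum, ← ENNReal.toReal_div, hball, mul_div_assoc,
        ENNReal.div_self hm0 hmtop, mul_one, ENNReal.ofReal_toReal hcinv_top]
    intro S hS
    rw [hset, himg S hS, hdet]
  · -- degenerate case
    have hrange : LinearMap.range Al ≠ ⊤ := by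
      intro h
      exact hinj ((LinearMap.injective_iff_surjective_of_finrank_eq_finrank
        (by rw [hE, hF])).mpr (LinearMap.range_eq_top.mp h))
    have hzero : μF (LinearMap.range Al : Set F) = 0 :=
      Measure.addHaar_submodule μF _ hrange
    have himg0 : ∀ S : Set E, μF (Al '' S) = 0 := by
      intro S
      apply measure_mono_null _ hzero
      rintro w ⟨v, _, hw⟩
      exact ⟨v, hw⟩
    have hdet0 : BY.detIn A E F μE μF = 0 := by
      unfold BY.detIn
      rw [hnum, himg0]
      simp
    intro S hS
    rw [hset, himg0, hdet0]
    simp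

lemma detIn_nonneg (A : B →L[ℝ] B) (E F : Submodule ℝ B)
    (μE : Measure E) (μF : Measure F) : 0 ≤ BY.detIn A E F μE μF :=
  div_nonneg ENNReal.toReal_nonneg ENNReal.toReal_nonneg

end Aux

set_option maxHeartbeats 1000000 in
/-- Lemma 2.8 of the paper. Let `E, F, G` be subspaces of a Banach space
`B` of the same finite dimension `k`, and `A₁, A₂ : B → B` bounded linear maps with
`A₁(E) ⊆ F` and `A₂(F) ⊆ G`. Then (1) `m_F(A₁(S)) = det(A₁|E) · m_E(S)` for every Borel
set `S ⊆ E`, and (2) `det(A₂ A₁ | E) = det(A₂ | F) · det(A₁ | E)`. -/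
theorem statement5 {B : Type*} [NormedAddCommGroup B] [NormedSpace ℝ B] [CompleteSpace B]
    [MeasurableSpace B] [BorelSpace B]
    (k : ℕ) (E F G : Submodule ℝ B)
    [FiniteDimensional ℝ E] [FiniteDimensional ℝ F] [FiniteDimensional ℝ G]
    (hE : Module.finrank ℝ E = k) (hF : Module.finrank ℝ F = k)
    (hG : Module.finrank ℝ G = k)
    (A₁ A₂ : B →L[ℝ] B)
    (hA₁ : ∀ v ∈ E, A₁ v ∈ F) (hA₂ : ∀ v ∈ F, A₂ v ∈ G)
    (μE : MeasureTheory.Measure E) (μF : MeasureTheory.Measure F)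
    (μG : MeasureTheory.Measure G)
    (hμE : BY.IsInducedVolume E k μE) (hμF : BY.IsInducedVolume F k μF)
    (hμG : BY.IsInducedVolume G k μG) :
    (∀ S : Set E, MeasurableSet S →
      μF {w : F | ∃ v : E, v ∈ S ∧ A₁ (v : B) = (w : B)} =
        ENNReal.ofReal (BY.detIn A₁ E F μE μF) * μE S) ∧
    BY.detIn (A₂.comp A₁) E G μE μG = BY.detIn A₂ F G μF μG * BY.detIn A₁ E F μE μF := by
  classical
  have key1 := key_lemma k E F hE hF A₁ hA₁ μE μF hμE hμF
  have key2 := key_lemma k F G hF hG A₂ hA₂ μF μG hμF hμG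
  refine ⟨key1, ?_⟩
  -- part 2
  set ballE : Set E := {v : E | ‖v‖ ≤ 1} with hballE
  have hball_meas : MeasurableSet ballE := by
    have : ballE = Metric.closedBall (0 : E) 1 := by
      ext v; simp [hballE, Metric.mem_closedBall, dist_zero_right]
    rw [this]; exact Metric.isClosed_closedBall.measurableSet
  have hball_compact : IsCompact ballE := by
    have : ballE = Metric.closedBall (0 : E) 1 := by
      ext v; simp [hballE, Metric.mem_closedBall, dist_zero_right]
    rw [this]; exact isCompact_closedBall 0 1
  set g : E → F := fun v => (⟨A₁ (v : B), hA₁ _ v.2⟩ : F) with hg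
  have hgc : Continuous g := Continuous.subtype_mk (A₁.continuous.comp continuous_subtype_val) _
  set SF : Set F := {w : F | ∃ v : E, v ∈ ballE ∧ A₁ (v : B) = (w : B)} with hSF
  have hSFg : SF = g '' ballE := by
    ext w
    constructor
    · rintro ⟨v, hv, hw⟩
      exact ⟨v, hv, Subtype.ext hw⟩
    · rintro ⟨v, hv, hw⟩
      exact ⟨v, hv, by rw [← hw]⟩
  have hSF_meas : MeasurableSet SF := by
    rw [hSFg]
    exact (hball_compact.image hgc).measurableSet
  have h1 : μF SF = ENNReal.ofReal (BY.detIn A₁ E F μE μF) * μE ballE :=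
    key1 ballE hball_meas
  have h2 : μG {w : G | ∃ v : F, v ∈ SF ∧ A₂ (v : B) = (w : B)} =
      ENNReal.ofReal (BY.detIn A₂ F G μF μG) * μF SF :=
    key2 SF hSF_meas
  have hnumset : {w : G | ∃ v : B, v ∈ E ∧ ‖v‖ ≤ 1 ∧ A₂ (A₁ v) = (w : B)} =
      {w : G | ∃ v : F, v ∈ SF ∧ A₂ (v : B) = (w : B)} := by
    ext w
    constructor
    · rintro ⟨v, hv, h1', h2'⟩
      refine ⟨⟨A₁ v, hA₁ _ hv⟩, ⟨⟨v, hv⟩, h1', rfl⟩, ?_⟩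
      simpa using h2'
    · rintro ⟨f, ⟨v, hv, hfv⟩, hw⟩
      refine ⟨(v : B), v.2, hv, ?_⟩
      rw [hfv]
      exact hw
  have hm0 : μE ballE ≠ 0 := by
    rw [hballE, hμE.2]; exact euclideanBallVol_ne_zero k
  have hmtop : μE ballE ≠ ⊤ := by
    rw [hballE, hμE.2]; exact euclideanBallVol_ne_top k
  have hmR : (μE ballE).toReal ≠ 0 :=
    (ENNReal.toReal_pos hm0 hmtop).ne'
  have hfinal : μG {w : G | ∃ v : B, v ∈ E ∧ ‖v‖ ≤ 1 ∧ A₂ (A₁ v) = (w : B)} =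
      ENNReal.ofReal (BY.detIn A₂ F G μF μG) *
        (ENNReal.ofReal (BY.detIn A₁ E F μE μF) * μE ballE) := by
    rw [hnumset, h2, h1]
  have hlhs : BY.detIn (A₂.comp A₁) E G μE μG =
      (μG {w : G | ∃ v : B, v ∈ E ∧ ‖v‖ ≤ 1 ∧ A₂ (A₁ v) = (w : B)}).toReal /
        (μE ballE).toReal := rfl
  rw [hlhs, hfinal, ENNReal.toReal_mul, ENNReal.toReal_mul,
    ENNReal.toReal_ofReal (detIn_nonneg _ _ _ _ _),
    ENNReal.toReal_ofReal (detIn_nonneg _ _ _ _ _),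
    mul_div_assoc, mul_div_assoc, div_self hmR, mul_one]
end

section
/- For any k ≥ 1 there is a constant C_k ≥ 1 with the following property. Suppose V, V' ⊂ B are subspaces of dimension k and A : V → V' is an invertible linear map (the restriction of a bounded operator on B). Let V = E ⊕ F and V' = E' ⊕ F' be splittings with A(E) = E' and A(F) = F', and set q = dim E. Then α(E', F')^q / C_k ≤ det(A|V) / ( det(A|E) · det(A|F) ) ≤ C_k / α(E, F)^q. -/
open MeasureTheory Filter Metric Module Submodule Set

/-!
Write `σ (e, f) = e + f` for the isomorphism `E × F ≃ V`. Uniqueness of Haar measure, applied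
on `E × F → V'` and on `E' × F' → V'`, shows that `det(A|V) / (det(A|E) det(A|F))` is the
quotient `r(E, F) / r(E', F')`, where `r(E, F)` is the `m_E × m_F`-volume of `σ⁻¹(B_V)` in units
of `m_E(B_E) m_F(B_F)`. Since `σ⁻¹(B_V)` contains `B_E/2 × B_F/2`, `r(E, F) ≥ 2^{-k}`; since the
`E`-component of a point of `σ⁻¹(B_V)` has norm at most `1/α(E, F)` and every `F`-slice lies in a
ball of radius `2`, `r(E, F) α(E, F)^q ≤ 2^k`. Hence `C_k = 4^k` works.
-/

namespace BY

section Angle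

variable {B : Type*} [NormedAddCommGroup B] [NormedSpace ℝ B] {E F : Submodule ℝ B}

theorem alphaAngle_nonneg (E F : Submodule ℝ B) : 0 ≤ alphaAngle E F :=
  Real.sInf_nonneg (by rintro _ ⟨e, -, f, -, -, rfl⟩; exact norm_nonneg _)

theorem alphaAngle_le_norm_sub {e f : B} (he : e ∈ E) (hf : f ∈ F) (he1 : ‖e‖ = 1) :
    alphaAngle E F ≤ ‖e - f‖ :=
  csInf_le ⟨0, by rintro _ ⟨e, -, f, -, -, rfl⟩; exact norm_nonneg _⟩ ⟨e, he, f, hf, he1, rfl⟩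

theorem alphaAngle_mul_norm_le {e f : B} (he : e ∈ E) (hf : f ∈ F) :
    alphaAngle E F * ‖e‖ ≤ ‖e + f‖ := by
  rcases eq_or_ne e 0 with rfl | he0
  · simp
  have hn : 0 < ‖e‖ := norm_pos_iff.2 he0
  have h := alphaAngle_le_norm_sub (E.smul_mem ‖e‖⁻¹ he) (F.smul_mem (-‖e‖⁻¹) hf)
    (by rw [norm_smul, norm_inv, norm_norm, inv_mul_cancel₀ hn.ne'])
  rw [show ‖e‖⁻¹ • e - (-‖e‖⁻¹) • f = ‖e‖⁻¹ • (e + f) by module, norm_smul, norm_inv,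
    norm_norm, le_inv_mul_iff₀ hn] at h
  linarith

theorem ker_subtype_coprod_subtype (hEF : E ⊓ F = ⊥) :
    LinearMap.ker (E.subtype.coprod F.subtype) = ⊥ := by
  rw [LinearMap.ker_coprod_of_disjoint_range _ _ (by simpa [disjoint_iff] using hEF),
    ker_subtype, ker_subtype, Submodule.prod_bot]

theorem exists_norm_prod_le [FiniteDimensional ℝ E] [FiniteDimensional ℝ F] (hEF : E ⊓ F = ⊥) :
    ∃ K : ℝ, 0 < K ∧ ∀ p : E × F, ‖p‖ ≤ K * ‖(p.1 : B) + p.2‖ := by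
  obtain ⟨K, hK, hanti⟩ :=
    (E.subtype.coprod F.subtype).exists_antilipschitzWith (ker_subtype_coprod_subtype hEF)
  exact ⟨K, hK, fun p => ZeroHomClass.bound_of_antilipschitz _ hanti p⟩

theorem alphaAngle_pos [FiniteDimensional ℝ E] [FiniteDimensional ℝ F] (hEF : E ⊓ F = ⊥)
    (hE : E ≠ ⊥) : 0 < alphaAngle E F := by
  obtain ⟨K, hK, hbound⟩ := exists_norm_prod_le hEF
  have : Nontrivial E := nontrivial_iff_ne_bot.2 hE
  obtain ⟨e₀, he₀⟩ := exists_norm_eq E zero_le_one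
  refine (inv_pos.2 hK).trans_le (le_csInf ⟨_, e₀, e₀.2, 0, F.zero_mem, he₀, rfl⟩ ?_)
  rintro _ ⟨e, he, f, hf, he1, rfl⟩
  have h := (norm_fst_le ((⟨e, he⟩, -⟨f, hf⟩) : E × F)).trans (hbound _)
  change ‖e‖ ≤ K * ‖e + -f‖ at h
  rw [← sub_eq_add_neg, he1] at h
  exact (inv_le_iff_one_le_mul₀' hK).2 h

theorem alphaAngle_pow_finrank_pos [FiniteDimensional ℝ E] [FiniteDimensional ℝ F]
    (hEF : E ⊓ F = ⊥) : 0 < alphaAngle E F ^ finrank ℝ E := by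
  rcases eq_or_ne E ⊥ with rfl | hE
  · simp
  · exact pow_pos (alphaAngle_pos hEF hE) _

end Angle

section Equiv

variable {B B' : Type*} [NormedAddCommGroup B] [NormedSpace ℝ B]
  [NormedAddCommGroup B'] [NormedSpace ℝ B'] {E F : Submodule ℝ B}

theorem exists_continuousLinearEquiv_coe_eq {X : Type*} [NormedAddCommGroup X] [NormedSpace ℝ X]
    [FiniteDimensional ℝ X] (f : X →ₗ[ℝ] B) (hf : LinearMap.ker f = ⊥) {V : Submodule ℝ B}
    (hV : LinearMap.range f = V) : ∃ T : X ≃L[ℝ] V, ∀ x, (T x : B) = f x := by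
  subst hV
  exact ⟨(LinearEquiv.ofInjective f (LinearMap.ker_eq_bot.1 hf)).toContinuousLinearEquiv,
    fun _ => rfl⟩

theorem exists_prodEquiv_of_sup_eq [FiniteDimensional ℝ E] [FiniteDimensional ℝ F]
    {V : Submodule ℝ B} (hEF : E ⊓ F = ⊥) (hV : E ⊔ F = V) :
    ∃ σ : (E × F) ≃L[ℝ] V, ∀ p, (σ p : B) = p.1 + p.2 :=
  exists_continuousLinearEquiv_coe_eq _ (ker_subtype_coprod_subtype hEF)
    (by rw [LinearMap.range_coprod, range_subtype, range_subtype, hV])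

theorem exists_equiv_of_map_eq [FiniteDimensional ℝ E] (A : B →L[ℝ] B') {E' : Submodule ℝ B'}
    (hinj : ∀ v ∈ E, A v = 0 → v = 0) (hE : E.map (A : B →ₗ[ℝ] B') = E') :
    ∃ T : E ≃L[ℝ] E', ∀ x, (T x : B') = A x :=
  exists_continuousLinearEquiv_coe_eq ((A : B →ₗ[ℝ] B') ∘ₗ E.subtype)
    (LinearMap.ker_eq_bot'.2 fun x hx => Subtype.ext (hinj x x.2 hx))
    (by rw [LinearMap.range_comp, range_subtype, hE])

theorem finrank_map_eq_of_injOn [FiniteDimensional ℝ E] (A : B →L[ℝ] B')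
    (hinj : ∀ v ∈ E, A v = 0 → v = 0) : finrank ℝ (E.map (A : B →ₗ[ℝ] B')) = finrank ℝ E := by
  obtain ⟨T, -⟩ := exists_equiv_of_map_eq A hinj rfl
  exact T.toLinearEquiv.finrank_eq.symm

theorem map_inf_map_eq_bot (A : B →ₗ[ℝ] B') (hinj : ∀ v ∈ E ⊔ F, A v = 0 → v = 0)
    (hEF : E ⊓ F = ⊥) : E.map A ⊓ F.map A = ⊥ := by
  rw [eq_bot_iff]
  rintro _ ⟨⟨e, he, rfl⟩, f, hf, hfe⟩
  have hef : e - f = 0 :=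
    hinj _ (sub_mem (mem_sup_left he) (mem_sup_right hf)) (by rw [map_sub, hfe, sub_self])
  have he' : e ∈ E ⊓ F := ⟨he, by rwa [sub_eq_zero.1 hef]⟩
  rw [hEF, Submodule.mem_bot] at he'
  simp [he']

end Equiv

theorem addHaar_image_mul_comm {X Y : Type*} [NormedAddCommGroup X] [NormedSpace ℝ X]
    [MeasurableSpace X] [BorelSpace X] [FiniteDimensional ℝ X] [NormedAddCommGroup Y]
    [NormedSpace ℝ Y] [MeasurableSpace Y] [BorelSpace Y] [FiniteDimensional ℝ Y]
    (T : X ≃L[ℝ] Y) (μ : Measure X) (ν : Measure Y) [μ.IsAddHaarMeasure] [ν.IsAddHaarMeasure]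
    (s t : Set X) : ν (T '' s) * μ t = ν (T '' t) * μ s := by
  have hmap : ∀ u, μ.map T (T '' u) = μ u := fun u => by
    rw [show (T : X → Y) = T.toHomeomorph.toMeasurableEquiv from rfl, MeasurableEquiv.map_apply]
    exact congrArg μ (preimage_image_eq u T.injective)
  have := T.isAddHaarMeasure_map μ
  rw [Measure.isAddLeftInvariant_eq_smul ν (μ.map T)]
  simp only [Measure.smul_apply, hmap, ENNReal.smul_def, smul_eq_mul]
  ring

section SplitBall

variable {B : Type*} [NormedAddCommGroup B] [NormedSpace ℝ B] {E F : Submodule ℝ B}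

def splitBall (E F : Submodule ℝ B) : Set (E × F) :=
  {p | ‖(p.1 : B) + p.2‖ ≤ 1}

/-- The ratio `r(E, F)` of the header; it is unchanged when `μE` or `μF` is rescaled. -/
noncomputable def splitVolumeRatio [MeasurableSpace B] (μE : Measure E) (μF : Measure F) : ℝ :=
  ((μE.prod μF) (splitBall E F) / (μE (closedBall 0 1) * μF (closedBall 0 1))).toReal

theorem isClosed_splitBall : IsClosed (splitBall E F) :=
  isClosed_le (by fun_prop) continuous_const

theorem isCompact_splitBall [FiniteDimensional ℝ E] [FiniteDimensional ℝ F] (hEF : E ⊓ F = ⊥) :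
    IsCompact (splitBall E F) := by
  obtain ⟨K, hK, hbound⟩ := exists_norm_prod_le hEF
  refine Metric.isCompact_of_isClosed_isBounded isClosed_splitBall
    ((isBounded_closedBall (x := 0) (r := K)).subset fun p hp => ?_)
  rw [mem_closedBall_zero_iff]
  exact (hbound p).trans (mul_le_of_le_one_right hK.le hp)

theorem image_splitBall {E F V : Submodule ℝ B} (σ : (E × F) ≃L[ℝ] V)
    (hσ : ∀ p, (σ p : B) = p.1 + p.2) : σ '' splitBall E F = closedBall 0 1 := by
  have hpre : σ ⁻¹' closedBall 0 1 = splitBall E F := by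
    ext p
    simp [splitBall, ← hσ]
  rw [← hpre, image_preimage_eq _ σ.surjective]

variable [MeasurableSpace B] [BorelSpace B] [FiniteDimensional ℝ E] [FiniteDimensional ℝ F]
  (μE : Measure E) (μF : Measure F) [μE.IsAddHaarMeasure] [μF.IsAddHaarMeasure]

theorem measure_splitBall_ge :
    ENNReal.ofReal ((2⁻¹ : ℝ) ^ (finrank ℝ E + finrank ℝ F)) *
        (μE (closedBall 0 1) * μF (closedBall 0 1)) ≤ (μE.prod μF) (splitBall E F) := by
  have hsub : closedBall (0 : E) 2⁻¹ ×ˢ closedBall (0 : F) 2⁻¹ ⊆ splitBall E F := by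
    rintro ⟨e, f⟩ ⟨he, hf⟩
    rw [mem_closedBall_zero_iff] at he hf
    calc ‖(e : B) + f‖ ≤ ‖(e : B)‖ + ‖(f : B)‖ := norm_add_le _ _
      _ ≤ 2⁻¹ + 2⁻¹ := add_le_add he hf
      _ = 1 := by norm_num
  calc _ = μE (closedBall 0 2⁻¹) * μF (closedBall 0 2⁻¹) := by
        rw [Measure.addHaar_closedBall' μE 0 (r := 2⁻¹) (by norm_num),
          Measure.addHaar_closedBall' μF 0 (r := 2⁻¹) (by norm_num), pow_add,
          ENNReal.ofReal_mul (by positivity)]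
        ring
    _ = (μE.prod μF) (closedBall 0 2⁻¹ ×ˢ closedBall 0 2⁻¹) := (Measure.prod_prod _ _).symm
    _ ≤ _ := measure_mono hsub

theorem measure_splitBall_le {ρ : ℝ} (hρ : 0 ≤ ρ) (hbound : ∀ p ∈ splitBall E F, ‖p.1‖ ≤ ρ) :
    (μE.prod μF) (splitBall E F) ≤
      ENNReal.ofReal (ρ ^ finrank ℝ E * 2 ^ finrank ℝ F) *
        (μE (closedBall 0 1) * μF (closedBall 0 1)) := by
  set c := ENNReal.ofReal (2 ^ finrank ℝ F) * μF (closedBall 0 1)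
  have hslice : ∀ e : E,
      μF (Prod.mk e ⁻¹' splitBall E F) ≤ (closedBall (0 : E) ρ).indicator (fun _ => c) e := by
    intro e
    rcases eq_empty_or_nonempty (Prod.mk e ⁻¹' splitBall E F) with h | ⟨f₀, hf₀⟩
    · simp [h]
    rw [indicator_of_mem (mem_closedBall_zero_iff.2 (hbound _ hf₀))]
    calc μF (Prod.mk e ⁻¹' splitBall E F) ≤ μF (closedBall f₀ 2) := measure_mono fun f hf => by
          rw [mem_closedBall, dist_eq_norm]
          calc ‖f - f₀‖ = ‖((e : B) + f) - ((e : B) + f₀)‖ := by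
                rw [add_sub_add_left_eq_sub]; rfl
            _ ≤ 1 + 1 := (norm_sub_le _ _).trans (add_le_add hf hf₀)
            _ = 2 := by norm_num
      _ = c := Measure.addHaar_closedBall' μF f₀ zero_le_two
  calc (μE.prod μF) (splitBall E F) = ∫⁻ e, μF (Prod.mk e ⁻¹' splitBall E F) ∂μE :=
        Measure.prod_apply isClosed_splitBall.measurableSet
    _ ≤ ∫⁻ e, (closedBall (0 : E) ρ).indicator (fun _ => c) e ∂μE := lintegral_mono hslice
    _ = c * μE (closedBall 0 ρ) := lintegral_indicator_const measurableSet_closedBall c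
    _ = _ := by
        rw [Measure.addHaar_closedBall' μE 0 hρ, ENNReal.ofReal_mul (by positivity)]
        ring

theorem inv_two_pow_le_splitVolumeRatio (hEF : E ⊓ F = ⊥) :
    (2⁻¹ : ℝ) ^ (finrank ℝ E + finrank ℝ F) ≤ splitVolumeRatio μE μF := by
  have hM₀ : μE (closedBall 0 1) * μF (closedBall 0 1) ≠ 0 :=
    mul_ne_zero (measure_closedBall_pos _ _ one_pos).ne' (measure_closedBall_pos _ _ one_pos).ne'
  have hM : μE (closedBall 0 1) * μF (closedBall 0 1) ≠ ⊤ :=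
    ENNReal.mul_ne_top measure_closedBall_lt_top.ne measure_closedBall_lt_top.ne
  refine (ENNReal.ofReal_le_iff_le_toReal
    (ENNReal.div_lt_top (isCompact_splitBall hEF).measure_lt_top.ne hM₀).ne).1 ?_
  exact (ENNReal.le_div_iff_mul_le (Or.inl hM₀) (Or.inl hM)).2 (measure_splitBall_ge μE μF)

theorem splitVolumeRatio_le {ρ : ℝ} (hρ : 0 ≤ ρ) (hbound : ∀ p ∈ splitBall E F, ‖p.1‖ ≤ ρ) :
    splitVolumeRatio μE μF ≤ ρ ^ finrank ℝ E * 2 ^ finrank ℝ F :=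
  ENNReal.toReal_le_of_le_ofReal (by positivity)
    (ENNReal.div_le_of_le_mul (measure_splitBall_le μE μF hρ hbound))

theorem splitVolumeRatio_mul_alphaAngle_pow_le :
    splitVolumeRatio μE μF * alphaAngle E F ^ finrank ℝ E ≤ 2 ^ finrank ℝ F := by
  rcases eq_or_ne E ⊥ with rfl | hE
  · simpa using splitVolumeRatio_le μE μF le_rfl fun p _ => by
      rw [Subsingleton.elim p.1 0, norm_zero]
  rcases (alphaAngle_nonneg E F).eq_or_lt with hα | hα
  · rw [← hα, zero_pow (mt Submodule.finrank_eq_zero.1 hE), mul_zero]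
    positivity
  have hbound : ∀ p ∈ splitBall E F, ‖p.1‖ ≤ (alphaAngle E F)⁻¹ := fun p hp => by
    simpa using (le_inv_mul_iff₀ hα).2 ((alphaAngle_mul_norm_le p.1.2 p.2.2).trans hp)
  calc splitVolumeRatio μE μF * alphaAngle E F ^ finrank ℝ E
      ≤ ((alphaAngle E F)⁻¹ ^ finrank ℝ E * 2 ^ finrank ℝ F) * alphaAngle E F ^ finrank ℝ E := by
        gcongr
        exact splitVolumeRatio_le μE μF (inv_nonneg.2 hα.le) hbound
    _ = 2 ^ finrank ℝ F := by
        rw [mul_right_comm, ← mul_pow, inv_mul_cancel₀ hα.ne', one_pow, one_mul]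

end SplitBall

section Det

variable {B B' : Type*} [NormedAddCommGroup B] [NormedSpace ℝ B] [MeasurableSpace B]
  [NormedAddCommGroup B'] [NormedSpace ℝ B'] [MeasurableSpace B']

theorem toReal_measure_closedBall_pos {X : Type*} [NormedAddCommGroup X] [NormedSpace ℝ X]
    [MeasurableSpace X] [BorelSpace X] [FiniteDimensional ℝ X] (μ : Measure X)
    [μ.IsAddHaarMeasure] : 0 < (μ (closedBall 0 1)).toReal :=
  ENNReal.toReal_pos (measure_closedBall_pos _ _ one_pos).ne' measure_closedBall_lt_top.ne

theorem IsInducedVolume.measure_closedBall {E : Submodule ℝ B} {k : ℕ} {μ : Measure E}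
    (h : IsInducedVolume E k μ) : μ (closedBall 0 1) = euclideanBallVol k := by
  rw [← h.2]
  congr 1
  ext
  simp

theorem detIn_eq_of_coe_eq (A : B →L[ℝ] B') {E : Submodule ℝ B} {E' : Submodule ℝ B'}
    (T : E ≃L[ℝ] E') (hT : ∀ x, (T x : B') = A x) (μE : Measure E) (μE' : Measure E') :
    detIn A E E' μE μE' = (μE' (T '' closedBall 0 1)).toReal / (μE (closedBall 0 1)).toReal := by
  have hball : {v : E | ‖v‖ ≤ 1} = closedBall 0 1 := by ext; simp
  have himage : {w : E' | ∃ v : B, v ∈ E ∧ ‖v‖ ≤ 1 ∧ A v = w} = T '' closedBall 0 1 := by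
    ext w
    constructor
    · rintro ⟨v, hv, hv1, hAv⟩
      exact ⟨⟨v, hv⟩, mem_closedBall_zero_iff.2 hv1, Subtype.ext ((hT _).trans hAv)⟩
    · rintro ⟨v, hv1, rfl⟩
      exact ⟨v, v.2, mem_closedBall_zero_iff.1 hv1, (hT v).symm⟩
  rw [detIn, himage, hball]

variable [BorelSpace B]

theorem detIn_pos (A : B →L[ℝ] B') {E : Submodule ℝ B} {E' : Submodule ℝ B'}
    [FiniteDimensional ℝ E] [FiniteDimensional ℝ E'] (T : E ≃L[ℝ] E')
    (hT : ∀ x, (T x : B') = A x) (μE : Measure E) (μE' : Measure E') [μE.IsAddHaarMeasure]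
    [μE'.IsAddHaarMeasure] : 0 < detIn A E E' μE μE' := by
  rw [detIn_eq_of_coe_eq A T hT]
  refine div_pos (ENNReal.toReal_pos ?_ ?_) (toReal_measure_closedBall_pos μE)
  · have hopen := (T.isOpenMap _ isOpen_ball).measure_pos μE'
      ⟨T 0, mem_image_of_mem T (mem_ball_self one_pos)⟩
    exact (hopen.trans_le (measure_mono (image_mono ball_subset_closedBall))).ne'
  · exact ((isCompact_closedBall 0 1).image T.continuous).measure_lt_top.ne

variable [BorelSpace B'] {V E F : Submodule ℝ B} {V' E' F' : Submodule ℝ B'}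
  [FiniteDimensional ℝ E] [FiniteDimensional ℝ F]
  [FiniteDimensional ℝ V'] [FiniteDimensional ℝ E'] [FiniteDimensional ℝ F']

theorem measure_image_closedBall_mul_measure_splitBall
    (σ : (E × F) ≃L[ℝ] V) (hσ : ∀ p, (σ p : B) = p.1 + p.2)
    (σ' : (E' × F') ≃L[ℝ] V') (hσ' : ∀ p, (σ' p : B') = p.1 + p.2)
    (TV : V ≃L[ℝ] V') (TE : E ≃L[ℝ] E') (TF : F ≃L[ℝ] F')
    (hT : ∀ p, TV (σ p) = σ' (TE p.1, TF p.2))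
    (μV' : Measure V') (μE : Measure E) (μF : Measure F) (μE' : Measure E') (μF' : Measure F')
    [μV'.IsAddHaarMeasure] [μE.IsAddHaarMeasure] [μF.IsAddHaarMeasure]
    [μE'.IsAddHaarMeasure] [μF'.IsAddHaarMeasure] :
    μV' (TV '' closedBall 0 1) * (μE'.prod μF') (splitBall E' F') *
        (μE (closedBall 0 1) * μF (closedBall 0 1)) =
      μV' (closedBall 0 1) * (μE' (TE '' closedBall 0 1) * μF' (TF '' closedBall 0 1)) *
        (μE.prod μF) (splitBall E F) := by
  have hΦ : ∀ s, σ.trans TV '' s = TV '' (σ '' s) := fun s => (image_image TV σ s).symm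
  have hR : σ.trans TV '' closedBall 0 1 ×ˢ closedBall 0 1 =
      σ' '' (TE '' closedBall 0 1) ×ˢ (TF '' closedBall 0 1) := by
    rw [prod_image_image_eq, image_image]
    exact image_congr fun p _ => hT p
  have h₁ := addHaar_image_mul_comm (σ.trans TV) (μE.prod μF) μV' (splitBall E F)
    (closedBall 0 1 ×ˢ closedBall 0 1)
  have h₂ := addHaar_image_mul_comm σ' (μE'.prod μF') μV'
    ((TE '' closedBall 0 1) ×ˢ (TF '' closedBall 0 1)) (splitBall E' F')
  rw [hΦ, image_splitBall σ hσ, hR, Measure.prod_prod] at h₁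
  rw [image_splitBall σ' hσ', Measure.prod_prod] at h₂
  calc _ = (μV' (TV '' closedBall 0 1) * (μE (closedBall 0 1) * μF (closedBall 0 1))) *
        (μE'.prod μF') (splitBall E' F') := by ring
    _ = (μV' (σ' '' (TE '' closedBall 0 1) ×ˢ (TF '' closedBall 0 1)) *
        (μE'.prod μF') (splitBall E' F')) * (μE.prod μF) (splitBall E F) := by
        rw [h₁]; ring
    _ = _ := by rw [h₂]

theorem detIn_div_detIn_mul_detIn [FiniteDimensional ℝ V] (A : B →L[ℝ] B')
    (hV : V.map (A : B →ₗ[ℝ] B') = V') (hinj : ∀ v ∈ V, A v = 0 → v = 0) (hsup : E ⊔ F = V)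
    (hEF : E ⊓ F = ⊥) (hE : E.map (A : B →ₗ[ℝ] B') = E') (hF : F.map (A : B →ₗ[ℝ] B') = F')
    (μV : Measure V) (μE : Measure E) (μF : Measure F)
    (μV' : Measure V') (μE' : Measure E') (μF' : Measure F')
    [μV.IsAddHaarMeasure] [μE.IsAddHaarMeasure] [μF.IsAddHaarMeasure]
    [μV'.IsAddHaarMeasure] [μE'.IsAddHaarMeasure] [μF'.IsAddHaarMeasure]
    (hμV : μV (closedBall 0 1) = μV' (closedBall 0 1))
    (hμE : μE (closedBall 0 1) = μE' (closedBall 0 1))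
    (hμF : μF (closedBall 0 1) = μF' (closedBall 0 1)) :
    detIn A V V' μV μV' / (detIn A E E' μE μE' * detIn A F F' μF μF') =
      splitVolumeRatio μE μF / splitVolumeRatio μE' μF' := by
  have hinjE : ∀ v ∈ E, A v = 0 → v = 0 := fun v hv => hinj v (hsup ▸ mem_sup_left hv)
  have hinjF : ∀ v ∈ F, A v = 0 → v = 0 := fun v hv => hinj v (hsup ▸ mem_sup_right hv)
  have hE'F' : E' ⊓ F' = ⊥ := hE ▸ hF ▸ map_inf_map_eq_bot _ (hsup.symm ▸ hinj) hEF
  have hV' : E' ⊔ F' = V' := by rw [← hE, ← hF, ← Submodule.map_sup, hsup, hV]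
  obtain ⟨TV, hTV⟩ := exists_equiv_of_map_eq A hinj hV
  obtain ⟨TE, hTE⟩ := exists_equiv_of_map_eq A hinjE hE
  obtain ⟨TF, hTF⟩ := exists_equiv_of_map_eq A hinjF hF
  obtain ⟨σ, hσ⟩ := exists_prodEquiv_of_sup_eq hEF hsup
  obtain ⟨σ', hσ'⟩ := exists_prodEquiv_of_sup_eq hE'F' hV'
  have hT : ∀ p, TV (σ p) = σ' (TE p.1, TF p.2) := fun p =>
    Subtype.ext (by rw [hTV, hσ, hσ', map_add, hTE, hTF])
  have key := congrArg ENNReal.toReal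
    (measure_image_closedBall_mul_measure_splitBall σ hσ σ' hσ' TV TE TF hT μV' μE μF μE' μF')
  have hdE := detIn_pos A TE hTE μE μE'
  have hdF := detIn_pos A TF hTF μF μF'
  have hr' := (inv_two_pow_le_splitVolumeRatio μE' μF' hE'F').trans_lt' (by positivity)
  have hmV := toReal_measure_closedBall_pos μV
  have hmE := toReal_measure_closedBall_pos μE
  have hmF := toReal_measure_closedBall_pos μF
  rw [div_eq_div_iff (mul_pos hdE hdF).ne' hr'.ne']
  rw [detIn_eq_of_coe_eq A TE hTE] at hdE ⊢
  rw [detIn_eq_of_coe_eq A TF hTF] at hdF ⊢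
  rw [detIn_eq_of_coe_eq A TV hTV]
  simp only [splitVolumeRatio, ENNReal.toReal_div, ENNReal.toReal_mul, ← hμV, ← hμE, ← hμF]
    at key ⊢
  field_simp
  linear_combination key

end Det

theorem le_div_and_div_le_of_two_pow_bounds {r r' β β' : ℝ} (n : ℕ) (hr : (2⁻¹ : ℝ) ^ n ≤ r)
    (hr' : (2⁻¹ : ℝ) ^ n ≤ r') (hβ : 0 < β) (hrβ : r * β ≤ 2 ^ n) (hrβ' : r' * β' ≤ 2 ^ n) :
    β' / 4 ^ n ≤ r / r' ∧ r / r' ≤ 4 ^ n / β := by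
  have h4 : (4 : ℝ) ^ n * 2⁻¹ ^ n = 2 ^ n := by rw [← mul_pow]; norm_num
  have hr'₀ : 0 < r' := (by positivity : (0 : ℝ) < 2⁻¹ ^ n).trans_le hr'
  constructor
  · rw [div_le_div_iff₀ (by positivity) hr'₀, mul_comm β', mul_comm r]
    exact hrβ'.trans (h4 ▸ by gcongr)
  · rw [div_le_div_iff₀ hr'₀ hβ]
    exact hrβ.trans (h4 ▸ by gcongr)

end BY

theorem statement7_general {B : Type*} [NormedAddCommGroup B] [NormedSpace ℝ B]
    [MeasurableSpace B] [BorelSpace B] (k : ℕ) :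
    ∃ C : ℝ, 1 ≤ C ∧
      ∀ (A : B →L[ℝ] B) (V V' E F E' F' : Submodule ℝ B) (q : ℕ)
        [FiniteDimensional ℝ V] [FiniteDimensional ℝ V']
        [FiniteDimensional ℝ E] [FiniteDimensional ℝ F]
        [FiniteDimensional ℝ E'] [FiniteDimensional ℝ F'],
        Module.finrank ℝ V = k → Module.finrank ℝ V' = k →
        V.map A.toLinearMap = V' → (∀ v ∈ V, A v = 0 → v = 0) →
        E ≤ V → F ≤ V → E ⊔ F = V → E ⊓ F = ⊥ →
        E.map A.toLinearMap = E' → F.map A.toLinearMap = F' →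
        Module.finrank ℝ E = q → q ≤ k → Module.finrank ℝ F = k - q →
        ∀ (μV : MeasureTheory.Measure V) (μV' : MeasureTheory.Measure V')
          (μE : MeasureTheory.Measure E) (μE' : MeasureTheory.Measure E')
          (μF : MeasureTheory.Measure F) (μF' : MeasureTheory.Measure F'),
          BY.IsInducedVolume V k μV → BY.IsInducedVolume V' k μV' →
          BY.IsInducedVolume E q μE → BY.IsInducedVolume E' q μE' →
          BY.IsInducedVolume F (k - q) μF → BY.IsInducedVolume F' (k - q) μF' →
          BY.alphaAngle E' F' ^ q / C ≤
              BY.detIn A V V' μV μV' / (BY.detIn A E E' μE μE' * BY.detIn A F F' μF μF') ∧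
            BY.detIn A V V' μV μV' / (BY.detIn A E E' μE μE' * BY.detIn A F F' μF μF') ≤
              C / BY.alphaAngle E F ^ q := by
  refine ⟨4 ^ k, one_le_pow₀ (by norm_num), ?_⟩
  intro A V V' E F E' F' q _ _ _ _ _ _ _ _ hV hinj _ _ hsup hEF hE hF hq hqk hr
    μV μV' μE μE' μF μF' hμV hμV' hμE hμE' hμF hμF'
  have := hμV.1; have := hμV'.1; have := hμE.1; have := hμE'.1; have := hμF.1; have := hμF'.1
  have hE'F' : E' ⊓ F' = ⊥ := hE ▸ hF ▸ BY.map_inf_map_eq_bot _ (hsup.symm ▸ hinj) hEF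
  have hq' : finrank ℝ E' = q :=
    hE ▸ (BY.finrank_map_eq_of_injOn A fun v hv => hinj v (hsup ▸ mem_sup_left hv)).trans hq
  have hr' : finrank ℝ F' = k - q :=
    hF ▸ (BY.finrank_map_eq_of_injOn A fun v hv => hinj v (hsup ▸ mem_sup_right hv)).trans hr
  have hlow := BY.inv_two_pow_le_splitVolumeRatio μE μF hEF
  have hlow' := BY.inv_two_pow_le_splitVolumeRatio μE' μF' hE'F'
  have hup := BY.splitVolumeRatio_mul_alphaAngle_pow_le μE μF
  have hup' := BY.splitVolumeRatio_mul_alphaAngle_pow_le μE' μF'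
  have h2 : (2 : ℝ) ^ (k - q) ≤ 2 ^ k := pow_le_pow_right₀ one_le_two (Nat.sub_le k q)
  rw [hq, hr, Nat.add_sub_cancel' hqk] at hlow
  rw [hq, hr] at hup
  rw [hq', hr', Nat.add_sub_cancel' hqk] at hlow'
  rw [hq', hr'] at hup'
  rw [BY.detIn_div_detIn_mul_detIn A hV hinj hsup hEF hE hF μV μE μF μV' μE' μF'
    (hμV.measure_closedBall.trans hμV'.measure_closedBall.symm)
    (hμE.measure_closedBall.trans hμE'.measure_closedBall.symm)
    (hμF.measure_closedBall.trans hμF'.measure_closedBall.symm)]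
  exact BY.le_div_and_div_le_of_two_pow_bounds k hlow hlow'
    (hq ▸ BY.alphaAngle_pow_finrank_pos hEF) (hup.trans h2) (hup'.trans h2)

/-- Lemma 2.10 of the paper. For any `k ≥ 1` there is a constant
`C_k ≥ 1` with the following property. If `V, V' ⊆ B` have dimension `k`, `A` is a bounded
operator mapping `V` bijectively onto `V'`, and `V = E ⊕ F`, `V' = E' ⊕ F'` are splittings
with `A(E) = E'`, `A(F) = F'`, `q = dim E`, then
`α(E', F')^q / C_k ≤ det(A|V) / (det(A|E) det(A|F)) ≤ C_k / α(E, F)^q`. -/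
theorem statement7 {B : Type*} [NormedAddCommGroup B] [NormedSpace ℝ B] [CompleteSpace B]
    [MeasurableSpace B] [BorelSpace B] (k : ℕ) (hk : 1 ≤ k) :
    ∃ C : ℝ, 1 ≤ C ∧
      ∀ (A : B →L[ℝ] B) (V V' E F E' F' : Submodule ℝ B) (q : ℕ)
        [FiniteDimensional ℝ V] [FiniteDimensional ℝ V']
        [FiniteDimensional ℝ E] [FiniteDimensional ℝ F]
        [FiniteDimensional ℝ E'] [FiniteDimensional ℝ F'],
        Module.finrank ℝ V = k → Module.finrank ℝ V' = k →
        V.map A.toLinearMap = V' → (∀ v ∈ V, A v = 0 → v = 0) →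
        E ≤ V → F ≤ V → E ⊔ F = V → E ⊓ F = ⊥ →
        E.map A.toLinearMap = E' → F.map A.toLinearMap = F' →
        Module.finrank ℝ E = q → q ≤ k → Module.finrank ℝ F = k - q →
        ∀ (μV : MeasureTheory.Measure V) (μV' : MeasureTheory.Measure V')
          (μE : MeasureTheory.Measure E) (μE' : MeasureTheory.Measure E')
          (μF : MeasureTheory.Measure F) (μF' : MeasureTheory.Measure F'),
          BY.IsInducedVolume V k μV → BY.IsInducedVolume V' k μV' →
          BY.IsInducedVolume E q μE → BY.IsInducedVolume E' q μE' →
          BY.IsInducedVolume F (k - q) μF → BY.IsInducedVolume F' (k - q) μF' →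
          BY.alphaAngle E' F' ^ q / C ≤
              BY.detIn A V V' μV μV' / (BY.detIn A E E' μE μE' * BY.detIn A F F' μF μF') ∧
            BY.detIn A V V' μV μV' / (BY.detIn A E E' μE μE' * BY.detIn A F F' μF μF') ≤
              C / BY.alphaAngle E F ^ q :=
  statement7_general k
end

section
/- For any k ≥ 1 and any N̄ > k, there exist L = L(N̄, k) > 0 and δ = δ(N̄, k) > 0 such that the following holds. If {v_1, …, v_k} and {w_1, …, w_k} are two sets of k linearly independent unit vectors in a Banach space B for which max_{i ≤ k} |v_i − w_i| ≤ δ and N[v_1, …, v_k] ≤ N̄ and N[w_1, …, w_k] ≤ N̄, then | log ( m_{⟨v_1,…,v_k⟩} P[v_1, …, v_k] / m_{⟨w_1,…,w_k⟩} P[w_1, …, w_k] ) | ≤ L Σ_{i=1}^k |v_i − w_i|. -/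
open MeasureTheory Filter Metric Module Submodule Set

noncomputable section

theorem MeasureTheory.Measure.eq_measure_Icc_smul_volume_pi {ι : Type*} [Fintype ι] (ν : Measure (ι → ℝ))
    [ν.IsAddHaarMeasure] : ν = ν (Icc 0 1) • volume := by
  have h := ν.addHaarMeasure_unique (TopologicalSpace.PositiveCompacts.piIcc01 ι)
  rw [addHaarMeasure_eq_volume_pi] at h
  convert h using 3
  exact (Set.pi_univ_Icc 0 1).symm

end

/-!
Write `K_v ⊆ ℝᵏ` for the set of coefficient vectors `a` with `‖∑ aᵢ vᵢ‖ ≤ 1`, the unit ball of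
`⟨v₁, …, v_k⟩` read in the coordinates of the basis `v`. These coordinates carry `P[v]` to the unit
cube, so by uniqueness of Haar measure `m(P[v]) · vol(K_v) = m(unit ball) = ω_k`, and the ratio in
the statement is `vol(K_w) / vol(K_v)`. The bound `N[v] ≤ N̄` gives `|aᵢ| ≤ N̄ ‖∑ aⱼ vⱼ‖`, hence
`‖∑ aᵢ wᵢ‖ ≤ (1 + N̄ s) ‖∑ aᵢ vᵢ‖` with `s = ∑ ‖vᵢ - wᵢ‖`, that is `K_v ⊆ (1 + N̄ s) K_w`.
So `vol(K_v) ≤ (1 + N̄ s)ᵏ vol(K_w)`, symmetrically, and `k log (1 + N̄ s) ≤ k N̄ s`.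
-/

open Pointwise

theorem Real.abs_log_div_le_log_of_le_mul {x y C : ℝ} (hx : 0 < x) (hy : 0 < y)
    (hxy : x ≤ C * y) (hyx : y ≤ C * x) : |Real.log (x / y)| ≤ Real.log C := by
  have hC : 0 < C := pos_of_mul_pos_left (hx.trans_le hxy) hy.le
  have h₁ := Real.log_le_log hx hxy
  have h₂ := Real.log_le_log hy hyx
  rw [Real.log_mul hC.ne' hy.ne'] at h₁
  rw [Real.log_mul hC.ne' hx.ne'] at h₂
  rw [abs_le, Real.log_div hx.ne' hy.ne']
  constructor <;> linarith

namespace BY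

variable {B : Type*} [NormedAddCommGroup B] [NormedSpace ℝ B] {k : ℕ}

instance finiteDimensional_span_range (v : Fin k → B) :
    FiniteDimensional ℝ (span ℝ (range v)) :=
  FiniteDimensional.span_of_finite ℝ (finite_range v)

def coordUnitBall (v : Fin k → B) : Set (Fin k → ℝ) :=
  {a | ‖∑ i, a i • v i‖ ≤ 1}

noncomputable def coordEquiv {v : Fin k → B} (hv : LinearIndependent ℝ v) :
    span ℝ (range v) ≃L[ℝ] (Fin k → ℝ) :=
  (Basis.span hv).equivFun.toContinuousLinearEquiv

theorem coe_coordEquiv_symm {v : Fin k → B} (hv : LinearIndependent ℝ v) (a : Fin k → ℝ) :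
    ((coordEquiv hv).symm a : B) = ∑ i, a i • v i := by
  simp [coordEquiv, Basis.equivFun_symm_apply, Basis.span_apply]

theorem coe_eq_sum_coordEquiv {v : Fin k → B} (hv : LinearIndependent ℝ v)
    (x : span ℝ (range v)) : (x : B) = ∑ i, coordEquiv hv x i • v i := by
  rw [← coe_coordEquiv_symm hv, ContinuousLinearEquiv.symm_apply_apply]

theorem coordEquiv_symm_preimage_closedBall {v : Fin k → B} (hv : LinearIndependent ℝ v) :
    (coordEquiv hv).symm ⁻¹' closedBall 0 1 = coordUnitBall v := by
  ext a
  simp [coordUnitBall, ← coe_coordEquiv_symm hv]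

theorem coordEquiv_preimage_coordUnitBall {v : Fin k → B} (hv : LinearIndependent ℝ v) :
    coordEquiv hv ⁻¹' coordUnitBall v = {x | ‖x‖ ≤ 1} := by
  ext x
  simp [coordUnitBall, ← coe_eq_sum_coordEquiv hv x]

theorem coordEquiv_preimage_Icc {v : Fin k → B} (hv : LinearIndependent ℝ v) :
    coordEquiv hv ⁻¹' Icc 0 1 = Subtype.val ⁻¹' pped v := by
  ext x
  constructor
  · intro hx
    exact ⟨coordEquiv hv x, fun i => ⟨hx.1 i, hx.2 i⟩, coe_eq_sum_coordEquiv hv x⟩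
  · rintro ⟨a, ha, hxa⟩
    obtain rfl : x = (coordEquiv hv).symm a := Subtype.ext (by rw [hxa, coe_coordEquiv_symm])
    simpa [Pi.le_def, forall_and] using ha

theorem isCompact_coordUnitBall {v : Fin k → B} (hv : LinearIndependent ℝ v) :
    IsCompact (coordUnitBall v) := by
  rw [← coordEquiv_symm_preimage_closedBall hv]
  exact (coordEquiv hv).symm.toHomeomorph.isCompact_preimage.2 (isCompact_closedBall 0 1)

theorem volume_coordUnitBall_pos (v : Fin k → B) : 0 < volume (coordUnitBall v) := by
  have hopen : IsOpen ((fun a : Fin k → ℝ => ∑ i, a i • v i) ⁻¹' ball 0 1) :=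
    isOpen_ball.preimage (by fun_prop)
  refine (hopen.measure_pos volume ⟨0, by simp⟩).trans_le (measure_mono fun a ha => ?_)
  exact (mem_ball_zero_iff.1 ha).le

theorem toReal_volume_coordUnitBall_pos {v : Fin k → B} (hv : LinearIndependent ℝ v) :
    0 < (volume (coordUnitBall v)).toReal :=
  ENNReal.toReal_pos (volume_coordUnitBall_pos v).ne' (isCompact_coordUnitBall hv).measure_ne_top

theorem measure_pped_mul_volume_coordUnitBall [MeasurableSpace B] [BorelSpace B]
    {v : Fin k → B} (hv : LinearIndependent ℝ v) (μ : Measure (span ℝ (range v)))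
    [μ.IsAddHaarMeasure] :
    μ (Subtype.val ⁻¹' pped v) * volume (coordUnitBall v) = μ {x | ‖x‖ ≤ 1} := by
  set e := coordEquiv hv
  have he : Measurable e := e.continuous.measurable
  have hν : (μ.map e).IsAddHaarMeasure := e.isAddHaarMeasure_map μ
  have hmap : ∀ {s : Set (Fin k → ℝ)}, MeasurableSet s → μ.map e s = μ (e ⁻¹' s) :=
    fun hs => Measure.map_apply he hs
  rw [← coordEquiv_preimage_coordUnitBall hv, ← coordEquiv_preimage_Icc hv,
    ← hmap measurableSet_Icc, ← hmap (isCompact_coordUnitBall hv).measurableSet]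
  conv_rhs => rw [(μ.map e).eq_measure_Icc_smul_volume_pi]
  rfl

theorem measure_pped_toReal [MeasurableSpace B] [BorelSpace B] {v : Fin k → B}
    (hv : LinearIndependent ℝ v) {μ : Measure (span ℝ (range v))}
    (hμ : IsInducedVolume (span ℝ (range v)) k μ) :
    (μ (Subtype.val ⁻¹' pped v)).toReal =
      (euclideanBallVol k).toReal / (volume (coordUnitBall v)).toReal := by
  have := hμ.1
  rw [← hμ.2, ← measure_pped_mul_volume_coordUnitBall hv μ, ENNReal.toReal_mul,
    mul_div_cancel_right₀ _ (toReal_volume_coordUnitBall_pos hv).ne']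

theorem Nquan_nonneg (v : Fin k → B) : 0 ≤ Nquan v :=
  Finset.sum_nonneg fun _ _ => Real.sSup_nonneg fun _ ⟨_, _, hr⟩ => hr ▸ norm_nonneg _

theorem bddAbove_Nquan_summand {v : Fin k → B} (hv : LinearIndependent ℝ v) (i : Fin k) :
    BddAbove {r : ℝ | ∃ a : Fin k → ℝ, ‖∑ j, a j • v j‖ ≤ 1 ∧ r = ‖a i • v i‖} := by
  refine ⟨‖(coordEquiv hv : span ℝ (range v) →L[ℝ] (Fin k → ℝ))‖ * ‖v i‖, ?_⟩
  rintro _ ⟨a, ha, rfl⟩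
  set x := (coordEquiv hv).symm a
  have hx : ‖x‖ ≤ 1 := by rwa [← coe_coordEquiv_symm hv a] at ha
  have hai : ‖a i‖ ≤ ‖(coordEquiv hv : span ℝ (range v) →L[ℝ] (Fin k → ℝ))‖ :=
    calc ‖a i‖ ≤ ‖a‖ := norm_le_pi_norm a i
      _ = ‖(coordEquiv hv : span ℝ (range v) →L[ℝ] (Fin k → ℝ)) x‖ := by simp [x]
      _ ≤ _ := ContinuousLinearMap.le_of_opNorm_le_of_le _ le_rfl hx |>.trans (by simp)
  rw [norm_smul]
  gcongr

theorem norm_smul_le_Nquan_mul {v : Fin k → B} (hv : LinearIndependent ℝ v) (a : Fin k → ℝ)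
    (i : Fin k) : ‖a i • v i‖ ≤ Nquan v * ‖∑ j, a j • v j‖ := by
  set S := fun j => {r : ℝ | ∃ a : Fin k → ℝ, ‖∑ j, a j • v j‖ ≤ 1 ∧ r = ‖a j • v j‖}
  have hSi : sSup (S i) ≤ Nquan v :=
    Finset.single_le_sum (f := fun j => sSup (S j))
      (fun _ _ => Real.sSup_nonneg fun _ ⟨_, _, hr⟩ => hr ▸ norm_nonneg _) (Finset.mem_univ i)
  set t := ‖∑ j, a j • v j‖
  rcases (norm_nonneg _ : 0 ≤ t).eq_or_lt with ht | ht
  · have ha : a = 0 := funext <| Fintype.linearIndependent_iff.1 hv a (norm_eq_zero.1 ht.symm)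
    simp only [ha, Pi.zero_apply, zero_smul, norm_zero]
    exact mul_nonneg (Nquan_nonneg v) (norm_nonneg _)
  · have hscaled : t⁻¹ * ‖a i • v i‖ ∈ S i := by
      refine ⟨t⁻¹ • a, ?_, ?_⟩
      · simp only [Pi.smul_apply, smul_assoc, ← Finset.smul_sum, norm_smul, norm_inv]
        rw [Real.norm_of_nonneg ht.le, inv_mul_cancel₀ ht.ne']
      · simp [norm_smul, mul_assoc, abs_of_pos (show 0 < t from ht)]
    have := (le_csSup (bddAbove_Nquan_summand hv i) hscaled).trans hSi
    rwa [inv_mul_le_iff₀ ht, mul_comm] at this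

theorem norm_sum_smul_le_of_Nquan {v : Fin k → B} (hv : LinearIndependent ℝ v)
    (hnv : ∀ i, ‖v i‖ = 1) (w : Fin k → B) (a : Fin k → ℝ) :
    ‖∑ i, a i • w i‖ ≤ (1 + Nquan v * ∑ i, ‖v i - w i‖) * ‖∑ i, a i • v i‖ := by
  have hcoef : ∀ i, |a i| ≤ Nquan v * ‖∑ j, a j • v j‖ := fun i => by
    simpa [norm_smul, hnv] using norm_smul_le_Nquan_mul hv a i
  calc ‖∑ i, a i • w i‖ = ‖∑ i, a i • v i - ∑ i, a i • (v i - w i)‖ := by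
        simp [smul_sub, Finset.sum_sub_distrib]
    _ ≤ ‖∑ i, a i • v i‖ + ∑ i, |a i| * ‖v i - w i‖ := by
        refine (norm_sub_le _ _).trans (add_le_add_right ((norm_sum_le _ _).trans_eq ?_) _)
        simp [norm_smul]
    _ ≤ ‖∑ i, a i • v i‖ + ∑ i, Nquan v * ‖∑ j, a j • v j‖ * ‖v i - w i‖ := by
        gcongr with i
        exact hcoef i
    _ = (1 + Nquan v * ∑ i, ‖v i - w i‖) * ‖∑ i, a i • v i‖ := by
        rw [← Finset.mul_sum]
        ring

theorem coordUnitBall_subset_smul {v w : Fin k → B} {c : ℝ} (hc : 0 < c)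
    (h : ∀ a : Fin k → ℝ, ‖∑ i, a i • w i‖ ≤ c * ‖∑ i, a i • v i‖) :
    coordUnitBall v ⊆ c • coordUnitBall w := by
  intro a ha
  refine ⟨c⁻¹ • a, ?_, smul_inv_smul₀ hc.ne' a⟩
  change ‖∑ i, (c⁻¹ • a) i • w i‖ ≤ 1
  simp only [Pi.smul_apply, smul_assoc, ← Finset.smul_sum, norm_smul, norm_inv,
    Real.norm_of_nonneg hc.le]
  rw [inv_mul_le_iff₀ hc, mul_one]
  exact (h a).trans (mul_le_of_le_one_right hc.le (show ‖∑ i, a i • v i‖ ≤ 1 from ha))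

theorem toReal_volume_coordUnitBall_le {v w : Fin k → B} (hv : LinearIndependent ℝ v)
    (hnv : ∀ i, ‖v i‖ = 1) (hw : LinearIndependent ℝ w) {N : ℝ} (hN : Nquan v ≤ N) :
    (volume (coordUnitBall v)).toReal ≤
      (1 + N * ∑ i, ‖v i - w i‖) ^ k * (volume (coordUnitBall w)).toReal := by
  set c := 1 + N * ∑ i, ‖v i - w i‖
  have hc : 0 < c := by
    have := (Nquan_nonneg v).trans hN
    positivity
  have hsub : coordUnitBall v ⊆ c • coordUnitBall w :=
    coordUnitBall_subset_smul hc fun a => (norm_sum_smul_le_of_Nquan hv hnv w a).trans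
      (by gcongr; simp only [c]; gcongr)
  have hvol := measure_mono (μ := volume) hsub
  rw [Measure.addHaar_smul, finrank_fin_fun, abs_of_nonneg (by positivity)] at hvol
  simpa [ENNReal.toReal_mul, hc.le] using ENNReal.toReal_mono
    (ENNReal.mul_ne_top ENNReal.ofReal_ne_top (isCompact_coordUnitBall hw).measure_ne_top) hvol

end BY

theorem statement8_general {B : Type*} [NormedAddCommGroup B] [NormedSpace ℝ B]
    [MeasurableSpace B] [BorelSpace B]
    (k : ℕ) (hk : 1 ≤ k) (Nbar : ℝ) (hN : (k : ℝ) < Nbar) :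
    ∃ L > (0 : ℝ), ∃ δ > (0 : ℝ),
      ∀ v w : Fin k → B,
        LinearIndependent ℝ v → LinearIndependent ℝ w →
        (∀ i, ‖v i‖ = 1) → (∀ i, ‖w i‖ = 1) →
        (∀ i, ‖v i - w i‖ ≤ δ) →
        BY.Nquan v ≤ Nbar → BY.Nquan w ≤ Nbar →
        ∀ (μV : MeasureTheory.Measure (Submodule.span ℝ (Set.range v)))
          (μW : MeasureTheory.Measure (Submodule.span ℝ (Set.range w))),
          BY.IsInducedVolume (Submodule.span ℝ (Set.range v)) k μV →
          BY.IsInducedVolume (Submodule.span ℝ (Set.range w)) k μW →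
          |Real.log ((μV (Subtype.val ⁻¹' BY.pped v)).toReal /
              (μW (Subtype.val ⁻¹' BY.pped w)).toReal)| ≤
            L * ∑ i, ‖v i - w i‖ := by
  have hk₀ : (0 : ℝ) < k := by exact_mod_cast hk
  have hNbar : 0 < Nbar := hk₀.trans hN
  refine ⟨k * Nbar, by positivity, 1, one_pos, ?_⟩
  intro v w hv hw hnv hnw _ hNv hNw μV μW hμV hμW
  set s := ∑ i, ‖v i - w i‖
  have hvw := BY.toReal_volume_coordUnitBall_le hv hnv hw hNv
  have hwv := BY.toReal_volume_coordUnitBall_le hw hnw hv hNw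
  simp only [norm_sub_rev (w _)] at hwv
  have hω : (BY.euclideanBallVol k).toReal ≠ 0 :=
    (ENNReal.toReal_pos (measure_closedBall_pos _ _ one_pos).ne' measure_closedBall_lt_top.ne).ne'
  rw [BY.measure_pped_toReal hv hμV, BY.measure_pped_toReal hw hμW,
    div_div_div_cancel_left' _ _ hω]
  calc _ ≤ Real.log ((1 + Nbar * s) ^ k) := Real.abs_log_div_le_log_of_le_mul
        (BY.toReal_volume_coordUnitBall_pos hw) (BY.toReal_volume_coordUnitBall_pos hv) hwv hvw
    _ = k * Real.log (1 + Nbar * s) := Real.log_pow _ _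
    _ ≤ k * (Nbar * s) := by
        gcongr
        linarith [Real.log_le_sub_one_of_pos (by positivity : 0 < 1 + Nbar * s)]
    _ = k * Nbar * s := by ring

/-- Proposition 2.11 of the paper. For any `k ≥ 1` and `N̄ > k`, there
exist `L = L(N̄, k) > 0` and `δ = δ(N̄, k) > 0` such that: if `{vᵢ}, {wᵢ}` are two sets of
`k` linearly independent unit vectors with `maxᵢ |vᵢ - wᵢ| ≤ δ`, `N[v₁,…,v_k] ≤ N̄` and
`N[w₁,…,w_k] ≤ N̄`, then
`|log (m_{⟨vᵢ⟩} P[v₁,…,v_k] / m_{⟨wᵢ⟩} P[w₁,…,w_k])| ≤ L Σᵢ |vᵢ - wᵢ|`. -/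
theorem statement8 {B : Type*} [NormedAddCommGroup B] [NormedSpace ℝ B] [CompleteSpace B]
    [MeasurableSpace B] [BorelSpace B]
    (k : ℕ) (hk : 1 ≤ k) (Nbar : ℝ) (hN : (k : ℝ) < Nbar) :
    ∃ L > (0 : ℝ), ∃ δ > (0 : ℝ),
      ∀ v w : Fin k → B,
        LinearIndependent ℝ v → LinearIndependent ℝ w →
        (∀ i, ‖v i‖ = 1) → (∀ i, ‖w i‖ = 1) →
        (∀ i, ‖v i - w i‖ ≤ δ) →
        BY.Nquan v ≤ Nbar → BY.Nquan w ≤ Nbar →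
        ∀ (μV : MeasureTheory.Measure (Submodule.span ℝ (Set.range v)))
          (μW : MeasureTheory.Measure (Submodule.span ℝ (Set.range w))),
          BY.IsInducedVolume (Submodule.span ℝ (Set.range v)) k μV →
          BY.IsInducedVolume (Submodule.span ℝ (Set.range w)) k μW →
          |Real.log ((μV (Subtype.val ⁻¹' BY.pped v)).toReal /
              (μW (Subtype.val ⁻¹' BY.pped w)).toReal)| ≤
            L * ∑ i, ‖v i - w i‖ :=
  statement8_general k hk Nbar hN
end
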